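/- arXiv:2506.10381 — 5 statements merged into one kernel-verified Lean document; each statement's English description precedes it below -/
import Mathlib

section
/- There exists an element μ ∈ S \ R with Tr(μ) = 0 such that the kernel of the trace map Tr : S → R equals μR = {μr : r ∈ R}. -/
/-- Let `S|R` be a degree-2 Galois extension of finite chain rings with
Frobenius `φ`, `2` a unit in `R`, and trace `Tr s = s + φ s`.  Then there exists
`μ ∈ S \ R` with `Tr μ = 0` such that `ker Tr = μ R`. -/
theorem trace_kernel_eq_span_mu
    (R S : Type*) [CommRing R] [CommRing S]
    [IsLocalRing R] [IsLocalRing S]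
    [IsPrincipalIdealRing R] [IsPrincipalIdealRing S]
    [Finite R] [Finite S] [Algebra R S]
    (hinj : Function.Injective (algebraMap R S))
    (hmR : (IsLocalRing.maximalIdeal S).comap (algebraMap R S) = IsLocalRing.maximalIdeal R)
    [Module.Free R S] (hrk : Module.finrank R S = 2)
    (hmS : IsLocalRing.maximalIdeal S
        = Ideal.map (algebraMap R S) (IsLocalRing.maximalIdeal R))
    (φ : S ≃ₐ[R] S) (hφ2 : ∀ s, φ (φ s) = s) (hφne : φ ≠ (AlgEquiv.refl : S ≃ₐ[R] S))
    (hfix : ∀ s : S, φ s = s ↔ s ∈ (algebraMap R S).range)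
    (h2 : IsUnit (2 : R))
    (Tr : S →ₗ[R] R) (hTr : ∀ s, algebraMap R S (Tr s) = s + φ s)
    (hTrsurj : Function.Surjective Tr) :
    ∃ μ : S, μ ∉ (algebraMap R S).range ∧ Tr μ = 0 ∧
      LinearMap.ker Tr = Submodule.span R {μ} := by
  classical
  obtain ⟨c, hc⟩ := h2.exists_left_inv
  have hc' : (2:R) * c = 1 := by linear_combination hc
  -- the projection onto the (-1)-eigenspace of φ
  set p : S →ₗ[R] S := c • (LinearMap.id - φ.toLinearMap) with hp
  have hpapply : ∀ x : S, p x = c • (x - φ x) := fun x => rfl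
  have hφlin : ∀ x : S, φ.toLinearMap x = φ x := fun _ => rfl
  have h2S : IsUnit (2 : S) := by
    have := h2.map (algebraMap R S); rwa [map_ofNat] at this
  -- Tr x = 0 iff φ x = -x
  have hker : ∀ x : S, Tr x = 0 ↔ φ x = -x := by
    intro x
    constructor
    · intro h
      have := hTr x
      rw [h, map_zero] at this
      linear_combination -this
    · intro h
      apply hinj
      rw [hTr x, h, map_zero, add_neg_cancel]
  -- p is idempotent
  have hpp : ∀ x : S, p (p x) = p x := by
    intro x
    simp only [hpapply, map_sub, map_smul, hφ2, smul_sub]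
    match_scalars <;>
      first
        | linear_combination c * hc
        | linear_combination -(c * hc)
  -- range p = ker Tr
  have hrange : LinearMap.range p = LinearMap.ker Tr := by
    apply le_antisymm
    · rintro _ ⟨x, rfl⟩
      rw [LinearMap.mem_ker, hker, hpapply, map_smul, map_sub, hφ2]
      rw [smul_sub, smul_sub, neg_sub]
    · intro x hx
      rw [LinearMap.mem_ker, hker] at hx
      refine ⟨x, ?_⟩
      rw [hpapply, hx, sub_neg_eq_add, ← two_smul R, smul_smul, hc, one_smul]
  -- ker p = range algebraMap
  have hkerp : LinearMap.ker p = LinearMap.range (Algebra.linearMap R S) := by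
    ext x
    simp only [LinearMap.mem_ker, hpapply, LinearMap.mem_range, Algebra.linearMap_apply]
    constructor
    · intro h
      have h0 : x - φ x = 0 := by
        have := congrArg (fun y => (2:R) • y) h
        simp only [smul_smul, hc', smul_zero, one_smul] at this
        exact this
      have : φ x = x := by linear_combination -h0
      obtain ⟨r, hr⟩ := (hfix x).mp this
      exact ⟨r, hr⟩
    · rintro ⟨r, rfl⟩
      have : φ (algebraMap R S r) = algebraMap R S r := (hfix _).mpr ⟨r, rfl⟩
      rw [this, sub_self, smul_zero]
  -- ker Tr is a direct summand of S
  have hcompl : IsCompl (LinearMap.ker p) (LinearMap.range p) := by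
    constructor
    · rw [disjoint_iff]
      ext x
      simp only [Submodule.mem_inf, LinearMap.mem_ker, LinearMap.mem_range,
        Submodule.mem_bot]
      constructor
      · rintro ⟨h0, y, rfl⟩
        rw [← hpp y, h0]
      · rintro rfl
        exact ⟨map_zero p, 0, map_zero p⟩
    · rw [codisjoint_iff]
      rw [eq_top_iff]
      intro x _
      have : x = (x - p x) + p x := by ring
      rw [this]
      exact Submodule.add_mem_sup (by simp [LinearMap.mem_ker, map_sub, hpp])
        (LinearMap.mem_range_self p x)
  -- the kernel of Tr, as a module
  set K : Submodule R S := LinearMap.ker Tr with hK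
  have hcompl' : IsCompl (LinearMap.ker p) K := hrange ▸ hcompl
  -- K is projective, hence free
  haveI : Module.Projective R K := by
    refine Module.Projective.of_split (K.subtype)
      (p.codRestrict K (fun x => hrange ▸ LinearMap.mem_range_self p x)) ?_
    ext ⟨x, hx⟩
    obtain ⟨y, hy⟩ := hrange.symm ▸ hx
    show p x = x
    rw [← hy, hpp]
  haveI : IsNoetherianRing R := inferInstance
  haveI : Module.Finite R K := Module.Finite.of_finite
  haveI : Module.Finite R (LinearMap.ker p) := Module.Finite.of_finite
  haveI : Module.FinitePresentation R K := Module.finitePresentation_of_finite R K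
  haveI : Module.Free R K := Module.free_of_flat_of_isLocalRing
  haveI : Module.Free R (LinearMap.ker p) := by
    rw [hkerp]
    exact Module.Free.of_equiv (LinearEquiv.ofInjective (Algebra.linearMap R S) hinj)
  -- rank computation
  have hrk1 : Module.finrank R (LinearMap.ker p) = 1 := by
    rw [hkerp, ← (LinearEquiv.ofInjective (Algebra.linearMap R S) hinj).finrank_eq,
      Module.finrank_self]
  have hrkK : Module.finrank R K = 1 := by
    have := (Submodule.prodEquivOfIsCompl _ _ hcompl').finrank_eq
    rw [Module.finrank_prod, hrk1, hrk] at this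
    omega
  -- the generator
  let b : Module.Basis (Fin 1) R K := hrkK ▸ Module.finBasis R K
  have hmemK : ∀ i : Fin 1, ((b i : K) : S) ∈ LinearMap.ker Tr := fun i => (b i).2
  have hTr0 : Tr ((b 0 : K) : S) = 0 := LinearMap.mem_ker.mp (hmemK 0)
  refine ⟨((b 0 : K) : S), ?_, hTr0, ?_⟩
  · intro hmem
    have hneg : φ ((b 0 : K) : S) = -((b 0 : K) : S) := (hker _).mp hTr0
    have heq : φ ((b 0 : K) : S) = ((b 0 : K) : S) := (hfix _).mpr hmem
    have h0 : (2 : S) * ((b 0 : K) : S) = 2 * 0 := by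
      rw [mul_zero, two_mul]
      nth_rewrite 1 [← heq]
      rw [hneg, neg_add_cancel]
    have hz : ((b 0 : K) : S) = 0 := h2S.mul_left_cancel h0
    exact b.ne_zero 0 (Subtype.ext hz)
  · have h1 : Submodule.span R (Set.range ⇑b) = (⊤ : Submodule R K) := b.span_eq
    have h2 := congrArg (Submodule.map K.subtype) h1
    rw [Submodule.map_span, Submodule.map_top, Submodule.range_subtype] at h2
    refine h2.symm.trans ?_
    congr 1
    ext y
    simp only [Set.mem_image, Set.mem_range, Set.mem_singleton_iff, Submodule.coe_subtype]
    constructor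
    · rintro ⟨z, ⟨i, rfl⟩, rfl⟩
      rw [Fin.fin_one_eq_zero i]
    · rintro rfl
      exact ⟨b 0, ⟨0, rfl⟩, rfl⟩
end

section
/- Let C be an R-submodule of S^n that is free as an R-module. Then the trace dual C^{⊥Tr} is a free R-module, (C^{⊥Tr})^{⊥Tr} = C, and rank_R(C) + rank_R(C^{⊥Tr}) = 2n. -/
open IsLocalRing

open IsLocalRing

section Chain
variable {A : Type*} [CommRing A] [IsLocalRing A] [Finite A]

lemma aux_pow_eq_zero {π : A} (hπ : π ∈ maximalIdeal A) : ∃ e : ℕ, π ^ e = 0 := by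
  obtain ⟨a, b, hne, hab⟩ := Finite.exists_ne_map_eq_of_infinite (fun k : ℕ => π ^ k)
  wlog hlt : a < b generalizing a b
  · exact this b a hne.symm hab.symm (by omega)
  have h1 : π ^ a * (1 - π ^ (b - a)) = 0 := by
    have : π ^ a * π ^ (b - a) = π ^ b := by rw [← pow_add]; congr 1; omega
    rw [mul_sub, mul_one, this, hab]; ring
  have hu : IsUnit (1 - π ^ (b - a)) := by
    rw [← IsLocalRing.notMem_maximalIdeal] at *
    intro hmem
    have : (1 : A) ∈ maximalIdeal A := by
      have : (1 : A) = (1 - π ^ (b - a)) + π ^ (b - a) := by ring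
      rw [this]
      exact add_mem hmem (Ideal.pow_mem_of_mem _ hπ _ (by omega))
    exact (IsLocalRing.maximalIdeal.isMaximal A).ne_top (Ideal.eq_top_of_isUnit_mem _ this isUnit_one)
  exact ⟨a, by simpa [hu.mul_left_eq_zero] using h1⟩

lemma aux_unit_pow {π : A} (hgen : maximalIdeal A = Ideal.span {π}) {x : A} (hx : x ≠ 0) :
    ∃ (i : ℕ) (u : Aˣ), x = (u : A) * π ^ i ∧ π ^ i ≠ 0 := by
  classical
  have hπm : π ∈ maximalIdeal A := by rw [hgen]; exact Ideal.mem_span_singleton_self π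
  obtain ⟨e, he⟩ := aux_pow_eq_zero hπm
  have hex : ∃ k : ℕ, ¬ π ^ k ∣ x := ⟨e, by rw [he]; simpa using hx⟩
  set j := Nat.find hex with hj
  have hjspec : ¬ π ^ j ∣ x := Nat.find_spec hex
  have hjpos : 0 < j := by
    rcases Nat.eq_zero_or_pos j with h0 | h
    · exfalso; apply hjspec; rw [h0]; simpa using dvd_refl x
    · exact h
  have hdvd : π ^ (j - 1) ∣ x := by
    by_contra hc
    have := Nat.find_min' hex hc
    omega
  obtain ⟨y, hy⟩ := hdvd
  have hyu : IsUnit y := by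
    by_contra hyc
    apply hjspec
    have : y ∈ maximalIdeal A := IsLocalRing.mem_maximalIdeal y |>.mpr hyc
    rw [hgen, Ideal.mem_span_singleton] at this
    obtain ⟨z, hz⟩ := this
    refine ⟨z, ?_⟩
    rw [hy, hz, ← mul_assoc, ← pow_succ]
    congr 2
    omega
  obtain ⟨u, hu⟩ := hyu
  refine ⟨j - 1, u, by rw [hy, hu, mul_comm], fun h0 => hx (by rw [hy, h0, zero_mul])⟩

lemma aux_dvd_of_ann {π : A} (hgen : maximalIdeal A = Ideal.span {π})
    {a c : A} (h : ∀ z, z * a = 0 → z * c = 0) : ∃ r, c = r * a := by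
  classical
  rcases eq_or_ne a 0 with rfl | ha
  · exact ⟨0, by simpa using h 1 (by simp)⟩
  rcases eq_or_ne c 0 with rfl | hc
  · exact ⟨0, by simp⟩
  have hπm : π ∈ maximalIdeal A := by rw [hgen]; exact Ideal.mem_span_singleton_self π
  have hex : ∃ k : ℕ, π ^ k = 0 := aux_pow_eq_zero hπm
  set e := Nat.find hex with he
  have hespec : π ^ e = 0 := Nat.find_spec hex
  obtain ⟨i, u, hau, hπi⟩ := aux_unit_pow hgen ha
  obtain ⟨j, v, hcv, hπj⟩ := aux_unit_pow hgen hc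
  have hie : i < e := by
    by_contra hc'
    exact hπi (by
      have : π ^ i = π ^ e * π ^ (i - e) := by rw [← pow_add]; congr 1; omega
      rw [this, hespec, zero_mul])
  have hkey : π ^ (e - i) * c = 0 := by
    have h1 : (π ^ (e - i) * (u⁻¹ : Aˣ)) * a = 0 := by
      rw [hau]
      have : (π ^ (e - i) * (u⁻¹ : Aˣ)) * ((u : A) * π ^ i) = ((u⁻¹ : Aˣ) * u) * (π ^ (e - i) * π ^ i) := by ring
      rw [this, ← pow_add]
      have : e - i + i = e := by omega
      rw [this, hespec]
      simp
    have h2 := h (π ^ (e - i) * (u⁻¹ : Aˣ)) h1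
    have := congrArg (fun t => (u : A) * t) h2
    simp only [mul_zero] at this
    calc π ^ (e - i) * c = (u : A) * (π ^ (e - i) * (u⁻¹ : Aˣ) * c) := by
          rw [← mul_assoc, ← mul_assoc]
          rw [show (u : A) * π ^ (e - i) * (u⁻¹ : Aˣ) = ((u : A) * (u⁻¹ : Aˣ)) * π ^ (e - i) by ring,
            Units.mul_inv, one_mul]
      _ = 0 := this
  have hij : i ≤ j := by
    by_contra hij
    push_neg at hij
    have : π ^ (e - i + j) = 0 := by
      have h1 : (v⁻¹ : Aˣ) * (π ^ (e - i) * c) = π ^ (e - i + j) := by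
        rw [hcv, pow_add]
        rw [show (v⁻¹ : Aˣ) * (π ^ (e - i) * ((v : A) * π ^ j)) = ((v⁻¹ : Aˣ) * v) * (π ^ (e-i) * π ^ j) by ring]
        rw [Units.inv_mul, one_mul]
      rw [← h1, hkey, mul_zero]
    have hle := Nat.find_min' hex this
    omega
  refine ⟨(v : A) * π ^ (j - i) * (u⁻¹ : Aˣ), ?_⟩
  rw [hcv, hau]
  rw [show (v : A) * π ^ (j - i) * (u⁻¹ : Aˣ) * ((u : A) * π ^ i)
      = ((u⁻¹ : Aˣ) * u) * ((v : A) * (π ^ (j - i) * π ^ i)) by ring]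
  rw [Units.inv_mul, one_mul, ← pow_add]
  congr 2
  omega

lemma aux_baer [IsPrincipalIdealRing A] : Module.Baer A A := by
  intro I g
  obtain ⟨π, hgen'⟩ := (IsPrincipalIdealRing.principal (maximalIdeal A)).principal
  obtain ⟨a, haI'⟩ := (IsPrincipalIdealRing.principal I).principal
  have hgen : maximalIdeal A = Ideal.span {π} := hgen'
  have haI : I = Ideal.span {a} := haI'
  have ha : a ∈ I := by rw [haI]; exact Ideal.mem_span_singleton_self a
  set c := g ⟨a, ha⟩ with hcdef
  have hann : ∀ z, z * a = 0 → z * c = 0 := by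
    intro z hz
    have hz' : z • (⟨a, ha⟩ : I) = 0 := by
      ext
      simpa [smul_eq_mul] using hz
    calc z * c = z • g ⟨a, ha⟩ := by rw [smul_eq_mul]
      _ = g (z • ⟨a, ha⟩) := (map_smul g z _).symm
      _ = 0 := by rw [hz', map_zero]
  obtain ⟨r, hr⟩ := aux_dvd_of_ann hgen hann
  refine ⟨LinearMap.toSpanSingleton A A r, ?_⟩
  intro x hx
  have : a ∣ x := by rwa [haI, Ideal.mem_span_singleton] at hx
  obtain ⟨t, ht⟩ := this
  have hxt : (⟨x, hx⟩ : I) = t • ⟨a, ha⟩ := by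
    ext
    simp [ht, smul_eq_mul, mul_comm]
  rw [hxt, map_smul]
  simp only [LinearMap.toSpanSingleton_apply, smul_eq_mul, ← hcdef, hr, ht]
  ring

lemma aux_injective [IsPrincipalIdealRing A] : Module.Injective A A :=
  aux_baer.injective

end Chain

universe u v

lemma aux_orth {R : Type u} {M : Type v} [CommRing R] [IsLocalRing R] [Finite R]
    [AddCommGroup M] [Module R M] [Finite M] [Module.Free R M]
    (inj : Module.Injective R R)
    (ψ : M →ₗ[R] Module.Dual R M) (hbij : Function.Bijective ψ)
    (N : Submodule R M) (hNfree : Module.Free R N) :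
    Module.Free R (LinearMap.ker (N.subtype.dualMap ∘ₗ ψ)) ∧
    Module.finrank R N
      + Module.finrank R (LinearMap.ker (N.subtype.dualMap ∘ₗ ψ)) = Module.finrank R M ∧
    Nat.card N * Nat.card (LinearMap.ker (N.subtype.dualMap ∘ₗ ψ)) = Nat.card M := by
  haveI := hNfree
  haveI : IsNoetherianRing R := isNoetherian_of_finite R R
  set θ : M →ₗ[R] Module.Dual R N := N.subtype.dualMap ∘ₗ ψ with hθ
  have hθapp : ∀ (m : M) (x : N), θ m x = ψ m (x : M) := fun m x => rfl
  -- θ is surjective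
  have hsurj : Function.Surjective θ := by
    intro f
    haveI := inj
    obtain ⟨F, hF⟩ := Module.Injective.extension_property R R ↥N M N.subtype N.injective_subtype f
    obtain ⟨m, hm⟩ := hbij.2 F
    refine ⟨m, ?_⟩
    ext x
    rw [hθapp, hm]
    exact LinearMap.congr_fun hF x
  -- a linear section of θ
  obtain ⟨g, hg⟩ := Module.projective_lifting_property θ LinearMap.id hsurj
  have hgθ : ∀ d, θ (g d) = d := fun d => LinearMap.congr_fun hg d
  have hginj : Function.Injective g := by
    intro d₁ d₂ h
    rw [← hgθ d₁, ← hgθ d₂, h]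
  -- ker θ and range g are complementary
  have hcompl : IsCompl (LinearMap.ker θ) (LinearMap.range g) := by
    constructor
    · rw [disjoint_iff]
      ext x
      simp only [Submodule.mem_inf, LinearMap.mem_ker, LinearMap.mem_range,
        Submodule.mem_bot]
      constructor
      · rintro ⟨hk, d, rfl⟩
        rw [hgθ] at hk
        rw [hk, map_zero]
      · rintro rfl
        exact ⟨map_zero θ, 0, map_zero g⟩
    · rw [codisjoint_iff]
      rw [eq_top_iff]
      intro m _
      have : m = (m - g (θ m)) + g (θ m) := by abel
      rw [this]
      refine Submodule.add_mem_sup ?_ ⟨θ m, rfl⟩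
      rw [LinearMap.mem_ker, map_sub, hgθ, sub_self]
  -- the equivalence M ≃ ker θ × range g
  have e : (↥(LinearMap.ker θ) × ↥(LinearMap.range g)) ≃ₗ[R] M :=
    Submodule.prodEquivOfIsCompl _ _ hcompl
  have erange : Module.Dual R ↥N ≃ₗ[R] ↥(LinearMap.range g) := LinearEquiv.ofInjective g hginj
  -- ker θ is free
  have hproj : Module.Projective R ↥(LinearMap.ker θ) := by
    refine Module.Projective.of_split (M := M) (LinearMap.ker θ).subtype
      (LinearMap.codRestrict (LinearMap.ker θ) (LinearMap.id - g ∘ₗ θ) ?_) ?_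
    · intro m
      rw [LinearMap.mem_ker]
      simp only [LinearMap.sub_apply, LinearMap.id_apply, LinearMap.comp_apply]
      rw [map_sub, hgθ, sub_self]
    · ext ⟨k, hk⟩
      rw [LinearMap.mem_ker] at hk
      simp [hk]
  haveI : Module.FinitePresentation R ↥(LinearMap.ker θ) := Module.finitePresentation_of_finite _ _
  haveI hkerfree : Module.Free R ↥(LinearMap.ker θ) := Module.free_of_flat_of_isLocalRing
  refine ⟨hkerfree, ?_, ?_⟩
  -- finrank equality
  · have hb := Module.Free.chooseBasis R ↥N
    have hfr1 : Module.finrank R (Module.Dual R ↥N) = Module.finrank R ↥N := by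
      rw [Module.finrank_eq_card_basis hb, Module.finrank_eq_card_basis hb.dualBasis]
    have hfr2 : Module.finrank R ↥(LinearMap.range g) = Module.finrank R ↥N := by
      rw [← erange.finrank_eq, hfr1]
    haveI : Module.Free R ↥(LinearMap.range g) := Module.Free.of_equiv erange
    rw [← e.finrank_eq, Module.finrank_prod, hfr2]
    ring
  -- cardinality
  · have hc1 : Nat.card M = Nat.card ↥(LinearMap.ker θ) * Nat.card ↥(LinearMap.range g) := by
      rw [← Nat.card_congr e.toEquiv, Nat.card_prod]
    have hc2 : Nat.card ↥(LinearMap.range g) = Nat.card ↥N := by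
      have hb := Module.Free.chooseBasis R ↥N
      exact Nat.card_congr (erange.symm.toEquiv.trans
        (hb.dualBasis.equivFun.toEquiv.trans hb.equivFun.toEquiv.symm))
    rw [hc1, hc2]
    ring

lemma aux_nondeg {R S : Type*} [CommRing R] [CommRing S]
    [IsLocalRing R] [IsLocalRing S] [IsPrincipalIdealRing R]
    [Finite S] [Algebra R S]
    (hmS : maximalIdeal S = Ideal.map (algebraMap R S) (maximalIdeal R))
    (Tr : S →ₗ[R] R) (hTrsurj : Function.Surjective Tr)
    {x : S} (hx : x ≠ 0) : ∃ y : S, Tr (x * y) ≠ 0 := by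
  classical
  obtain ⟨p, hp'⟩ := (IsPrincipalIdealRing.principal (maximalIdeal R)).principal
  have hp : maximalIdeal R = Ideal.span {p} := hp'
  set π : S := algebraMap R S p with hπdef
  have hgenS : maximalIdeal S = Ideal.span {π} := by
    rw [hmS, hp, Ideal.map_span]
    simp
    rfl
  have hπm : π ∈ maximalIdeal S := by
    rw [hgenS]; exact Ideal.mem_span_singleton_self π
  have hex : ∃ k : ℕ, π ^ k = 0 := aux_pow_eq_zero hπm
  set e := Nat.find hex with he
  have hespec : π ^ e = 0 := Nat.find_spec hex
  have hepos : 0 < e := by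
    rcases Nat.eq_zero_or_pos e with h0 | h
    · exfalso
      rw [h0, pow_zero] at hespec
      exact one_ne_zero hespec
    · exact h
  obtain ⟨i, u, hxu, hπi⟩ := aux_unit_pow hgenS hx
  have hie : i < e := by
    by_contra hc
    exact hπi (by
      have : π ^ i = π ^ e * π ^ (i - e) := by rw [← pow_add]; congr 1; omega
      rw [this, hespec, zero_mul])
  obtain ⟨y0, hy0⟩ := hTrsurj 1
  refine ⟨(u⁻¹ : Sˣ) * π ^ (e - 1 - i) * y0, ?_⟩
  have hxy : x * ((u⁻¹ : Sˣ) * π ^ (e - 1 - i) * y0) = π ^ (e - 1) * y0 := by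
    rw [hxu]
    rw [show (u : S) * π ^ i * ((u⁻¹ : Sˣ) * π ^ (e - 1 - i) * y0)
        = ((u : S) * (u⁻¹ : Sˣ)) * ((π ^ i * π ^ (e - 1 - i)) * y0) by ring]
    rw [Units.mul_inv, one_mul, ← pow_add]
    congr 2
    omega
  rw [hxy]
  have hcast : π ^ (e - 1) = algebraMap R S (p ^ (e - 1)) := by
    rw [map_pow]
  have hval : Tr (π ^ (e - 1) * y0) = p ^ (e - 1) := by
    rw [hcast, ← Algebra.smul_def, map_smul, hy0, smul_eq_mul, mul_one]
  rw [hval]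
  intro h0
  have : π ^ (e - 1) = 0 := by rw [hcast, h0, map_zero]
  exact Nat.find_min hex (by omega) this

/-- The trace dual of an `R`-submodule `C ⊆ S^n`:
`C^⊥Tr = {a ∈ S^n : Tr (Σ_i a_i c_i) = 0 for all c ∈ C}`. -/
def traceDual {R S : Type*} [CommRing R] [CommRing S] [Algebra R S] {n : ℕ}
    (Tr : S →ₗ[R] R) (Cc : Submodule R (Fin n → S)) : Submodule R (Fin n → S) where
  carrier := {a | ∀ c ∈ Cc, Tr (∑ i, a i * c i) = 0}
  add_mem' := by
    intro a b ha hb c hc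
    have h : (∑ i, (a + b) i * c i) = (∑ i, a i * c i) + ∑ i, b i * c i := by
      rw [← Finset.sum_add_distrib]
      simp [add_mul]
    rw [h, map_add, ha c hc, hb c hc, add_zero]
  zero_mem' := by
    intro c hc
    simp
  smul_mem' := by
    intro r a ha c hc
    have h : (∑ i, (r • a) i * c i) = r • ∑ i, a i * c i := by
      rw [Finset.smul_sum]
      simp [smul_mul_assoc]
    rw [h, map_smul, ha c hc, smul_zero]

/-- The trace dual of a free `R`-submodule `C ⊆ S^n` is free,
`(C^⊥Tr)^⊥Tr = C`, and `rank C + rank C^⊥Tr = 2n`. -/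
theorem traceDual_free_double_dual_rank
    (R S : Type*) [CommRing R] [CommRing S]
    [IsLocalRing R] [IsLocalRing S]
    [IsPrincipalIdealRing R] [IsPrincipalIdealRing S]
    [Finite R] [Finite S] [Algebra R S]
    (hinj : Function.Injective (algebraMap R S))
    (hmR : (IsLocalRing.maximalIdeal S).comap (algebraMap R S) = IsLocalRing.maximalIdeal R)
    [Module.Free R S] (hrk : Module.finrank R S = 2)
    (hmS : IsLocalRing.maximalIdeal S
        = Ideal.map (algebraMap R S) (IsLocalRing.maximalIdeal R))
    (φ : S ≃ₐ[R] S) (hφ2 : ∀ s, φ (φ s) = s) (hφne : φ ≠ (AlgEquiv.refl : S ≃ₐ[R] S))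
    (hfix : ∀ s : S, φ s = s ↔ s ∈ (algebraMap R S).range)
    (h2 : IsUnit (2 : R))
    (Tr : S →ₗ[R] R) (hTr : ∀ s, algebraMap R S (Tr s) = s + φ s)
    (hTrsurj : Function.Surjective Tr)
    (n : ℕ) (Cc : Submodule R (Fin n → S)) (hCfree : Module.Free R Cc) :
    Module.Free R (traceDual Tr Cc) ∧
      traceDual Tr (traceDual Tr Cc) = Cc ∧
      Module.finrank R Cc + Module.finrank R (traceDual Tr Cc) = 2 * n := by
  classical
  -- the bilinear pairing
  set ψ : (Fin n → S) →ₗ[R] Module.Dual R (Fin n → S) :=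
    LinearMap.mk₂ R (fun a c => Tr (∑ i, a i * c i))
      (fun a a' c => by
        have h : (∑ i, (a + a') i * c i) = (∑ i, a i * c i) + ∑ i, a' i * c i := by
          rw [← Finset.sum_add_distrib]; simp [add_mul]
        rw [h, map_add])
      (fun r a c => by
        have h : (∑ i, (r • a) i * c i) = r • ∑ i, a i * c i := by
          rw [Finset.smul_sum]; simp [smul_mul_assoc]
        rw [h, map_smul])
      (fun a c c' => by
        have h : (∑ i, a i * (c + c') i) = (∑ i, a i * c i) + ∑ i, a i * c' i := by
          rw [← Finset.sum_add_distrib]; simp [mul_add]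
        rw [h, map_add])
      (fun r a c => by
        have h : (∑ i, a i * (r • c) i) = r • ∑ i, a i * c i := by
          rw [Finset.smul_sum]; simp [mul_smul_comm]
        rw [h, map_smul]) with hψ
  have hψapp : ∀ a c : Fin n → S, ψ a c = Tr (∑ i, a i * c i) := fun a c => rfl
  -- ψ is injective
  have hψinj : Function.Injective ψ := by
    rw [← LinearMap.ker_eq_bot]
    rw [LinearMap.ker_eq_bot']
    intro a ha
    by_contra hne
    have : ∃ i0, a i0 ≠ 0 := by
      by_contra hall
      push_neg at hall
      exact hne (funext hall)
    obtain ⟨i0, hi0⟩ := this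
    obtain ⟨y, hy⟩ := aux_nondeg hmS Tr hTrsurj hi0
    apply hy
    have := LinearMap.congr_fun ha (Pi.single i0 y)
    rw [hψapp] at this
    simp only [LinearMap.zero_apply] at this
    rw [← this]
    congr 1
    rw [Finset.sum_eq_single i0]
    · rw [Pi.single_eq_same]
    · intro i _ hne'
      rw [Pi.single_eq_of_ne hne', mul_zero]
    · intro h
      exact absurd (Finset.mem_univ i0) h
  -- ψ is surjective (cardinality argument)
  have hψbij : Function.Bijective ψ := by
    refine ⟨hψinj, ?_⟩
    have bM := Module.Free.chooseBasis R (Fin n → S)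
    let κ : Module.Dual R (Fin n → S) ≃ (Fin n → S) :=
      bM.dualBasis.equivFun.toEquiv.trans bM.equivFun.toEquiv.symm
    have hinj2 : Function.Injective (κ ∘ ψ) := κ.injective.comp hψinj
    have hsurj2 : Function.Surjective (κ ∘ ψ) := Finite.injective_iff_surjective.mp hinj2
    intro f
    obtain ⟨m, hm⟩ := hsurj2 (κ f)
    exact ⟨m, κ.injective hm⟩
  have inj : Module.Injective R R := aux_injective
  -- identify traceDual with the kernel of the restriction map
  have hTD : ∀ N : Submodule R (Fin n → S), traceDual Tr N = LinearMap.ker (N.subtype.dualMap ∘ₗ ψ) := by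
    intro N
    ext a
    constructor
    · intro ha
      rw [LinearMap.mem_ker]
      ext ⟨x, hxN⟩
      exact ha x hxN
    · intro ha c hc
      rw [LinearMap.mem_ker] at ha
      have := LinearMap.congr_fun ha ⟨c, hc⟩
      exact this
  -- first application
  obtain ⟨free1, rk1, card1⟩ := aux_orth inj ψ hψbij Cc hCfree
  rw [← hTD Cc] at free1 rk1 card1
  -- second application
  obtain ⟨free2, rk2, card2⟩ := aux_orth inj ψ hψbij (traceDual Tr Cc) free1
  rw [← hTD (traceDual Tr Cc)] at free2 rk2 card2
  -- finrank of M
  have hfrM : Module.finrank R (Fin n → S) = 2 * n := by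
    rw [Module.finrank_pi_fintype R]
    simp [hrk, mul_comm]
  refine ⟨free1, ?_, by rw [rk1, hfrM]⟩
  -- double dual
  haveI : Nonempty ↥(traceDual Tr Cc) := ⟨0⟩
  have hpos : 0 < Nat.card ↥(traceDual Tr Cc) := Nat.card_pos
  have hcard : Nat.card ↥(traceDual Tr (traceDual Tr Cc)) = Nat.card ↥Cc := by
    have h1 : Nat.card ↥(traceDual Tr Cc) * Nat.card ↥(traceDual Tr (traceDual Tr Cc))
        = Nat.card ↥Cc * Nat.card ↥(traceDual Tr Cc) := by rw [card1, card2]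
    rw [mul_comm (Nat.card ↥Cc) _] at h1
    exact Nat.eq_of_mul_eq_mul_left hpos h1
  have hle : Cc ≤ traceDual Tr (traceDual Tr Cc) := by
    intro c hc a ha
    have : Tr (∑ i, a i * c i) = 0 := ha c hc
    rw [← this]
    congr 1
    apply Finset.sum_congr rfl
    intro i _
    ring
  have hsub : (Cc : Set (Fin n → S)) ⊆ (traceDual Tr (traceDual Tr Cc) : Set (Fin n → S)) := hle
  have hfin : (traceDual Tr (traceDual Tr Cc) : Set (Fin n → S)).Finite := Set.toFinite _
  have hncard : (traceDual Tr (traceDual Tr Cc) : Set (Fin n → S)).ncard ≤ (Cc : Set (Fin n → S)).ncard := by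
    rw [← Nat.card_coe_set_eq, ← Nat.card_coe_set_eq]
    rw [show Nat.card ↥(traceDual Tr (traceDual Tr Cc) : Set (Fin n → S))
        = Nat.card ↥(traceDual Tr (traceDual Tr Cc)) from rfl]
    rw [show Nat.card ↥(Cc : Set (Fin n → S)) = Nat.card ↥Cc from rfl]
    rw [hcard]
  exact SetLike.coe_injective (Set.eq_of_subset_of_ncard_le hsub hncard hfin).symm
end

section
/- Let a(x) and b(x) be nonzero polynomials over R of degree at most n − 1. Then x^n − 1 divides a(x)·b(x) in R[x] if and only if for all polynomials u(x), v(x) ∈ R[x] one has (u(x̄)·a(x̄)) ⋆ (v(x̄)·b*(x̄)) = 0 in R. -/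
open Polynomial

namespace DvdStarAux

variable {R : Type*} [CommRing R]

/-- `X^n - 1` divides `X^(k+m*n) - X^k`. -/
lemma arith (n d i : ℕ) (hn : 0 < n) (hi : i ≤ d) :
    (n - 1) * d + i = (n - 1) * (d - i) + i * n := by
  obtain ⟨k, hk⟩ : ∃ k, d = i + k := ⟨d - i, by omega⟩
  obtain ⟨m, hm⟩ : ∃ m, n = m + 1 := ⟨n - 1, by omega⟩
  subst hk hm
  simp only [Nat.add_sub_cancel, Nat.add_sub_cancel_left]
  ring

/-- `X^n - 1` divides `X^(k+m*n) - X^k`. -/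
lemma dvd_X_pow_sub_X_pow (n k m : ℕ) :
    (X ^ n - 1 : R[X]) ∣ X ^ (k + m * n) - X ^ k := by
  have h1 : (X ^ n - 1 : R[X]) ∣ (X ^ n) ^ m - 1 := by
    simpa using sub_dvd_pow_sub_pow (X ^ n : R[X]) 1 m
  have h2 : (X ^ n - 1 : R[X]) ∣ X ^ k * ((X ^ n) ^ m - 1) := Dvd.dvd.mul_left h1 _
  have h3 : (X ^ k : R[X]) * ((X ^ n) ^ m - 1) = X ^ (k + m * n) - X ^ k := by
    rw [mul_sub, mul_one, ← pow_mul, ← pow_add]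
    ring_nf
  rwa [h3] at h2

lemma reflect_sum {ι : Type*} (s : Finset ι) (f : ι → R[X]) (N : ℕ) :
    reflect N (∑ i ∈ s, f i) = ∑ i ∈ s, reflect N (f i) := by
  induction s using Finset.cons_induction with
  | empty => simp
  | cons a s ha ih => simp [Finset.sum_cons, reflect_add, ih]

lemma comp_sum {ι : Type*} (s : Finset ι) (f : ι → R[X]) (q : R[X]) :
    (∑ i ∈ s, f i).comp q = ∑ i ∈ s, (f i).comp q := by
  induction s using Finset.cons_induction with
  | empty => simp
  | cons a s ha ih => simp [Finset.sum_cons, add_comp, ih]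

/-- The dot product of coefficients as a single coefficient of a product. -/
lemma dot_eq_coeff (n : ℕ) (hn : 0 < n) (f g : R[X]) :
    ∑ i ∈ Finset.range n, f.coeff i * g.coeff i
      = (f * reflect (n - 1) g).coeff (n - 1) := by
  rw [coeff_mul, Finset.Nat.sum_antidiagonal_eq_sum_range_succ_mk]
  have hrn : (n - 1).succ = n := by omega
  rw [hrn]
  refine Finset.sum_congr rfl fun i hi => ?_
  have hi' : i ≤ n - 1 := by
    have := Finset.mem_range.mp hi; omega
  congr 1
  rw [coeff_reflect, revAt_le (by omega : n - 1 - i ≤ n - 1)]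
  congr 1
  omega

/-- mod-(X^n-1) congruence for `reflect (n-1)`. -/
lemma dvd_reflect_sub (n : ℕ) (hn : 0 < n) (h : R[X]) (hh : h.natDegree ≤ n - 1) :
    (X ^ n - 1 : R[X]) ∣ reflect (n - 1) h - X ^ (n - 1) * h.comp (X ^ (n - 1)) := by
  have hrepr := as_sum_range' h n (by omega)
  conv_rhs => rw [hrepr, reflect_sum, comp_sum, Finset.mul_sum, ← Finset.sum_sub_distrib]
  refine Finset.dvd_sum fun i hi => ?_
  have hi' : i ≤ n - 1 := by have := Finset.mem_range.mp hi; omega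
  obtain ⟨k, hk⟩ : ∃ k, n = i + k + 1 := ⟨n - 1 - i, by omega⟩
  have h1 : reflect (n - 1) (monomial i (h.coeff i)) = C (h.coeff i) * X ^ (n - 1 - i) := by
    rw [← C_mul_X_pow_eq_monomial, reflect_C_mul_X_pow, revAt_le hi']
  have h2 : (X ^ (n - 1) : R[X]) * (monomial i (h.coeff i)).comp (X ^ (n - 1))
      = C (h.coeff i) * X ^ ((n - 1) * (i + 1)) := by
    rw [monomial_comp, ← pow_mul]
    ring_nf
  rw [h1, h2, ← mul_sub]
  refine Dvd.dvd.mul_left ?_ _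
  have he : (n - 1) * (i + 1) = (n - 1 - i) + i * n := by
    subst hk
    simp only [Nat.add_sub_cancel]
    have h4 : i + k - i = k := by omega
    rw [h4]
    ring
  have := (dvd_X_pow_sub_X_pow (R := R) n (n - 1 - i) i)
  rw [← he] at this
  exact (dvd_sub_comm.mp this)

/-- mod-(X^n-1) congruence for `reverse` composed with `X^(n-1)`. -/
lemma dvd_reverse_comp_sub (n : ℕ) (hn : 0 < n) (b : R[X]) (hdb : b.natDegree ≤ n - 1) :
    (X ^ n - 1 : R[X]) ∣ b.reverse.comp (X ^ (n - 1)) - X ^ ((n - 1) * b.natDegree) * b := by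
  set d := b.natDegree with hd
  have hrepr := as_sum_range' b (d + 1) (by omega)
  have h1 : b.reverse.comp (X ^ (n - 1))
      = ∑ i ∈ Finset.range (d + 1), C (b.coeff i) * X ^ ((n - 1) * (d - i)) := by
    conv_lhs => rw [Polynomial.reverse, ← hd, hrepr, reflect_sum, comp_sum]
    refine Finset.sum_congr rfl fun i hi => ?_
    have hi' : i ≤ d := by have := Finset.mem_range.mp hi; omega
    rw [← C_mul_X_pow_eq_monomial, reflect_C_mul_X_pow, revAt_le hi', mul_comp, C_comp,
      X_pow_comp, ← pow_mul]
  have h2 : (X ^ ((n - 1) * d) : R[X]) * b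
      = ∑ i ∈ Finset.range (d + 1), C (b.coeff i) * X ^ ((n - 1) * d + i) := by
    conv_lhs => rw [hrepr, Finset.mul_sum]
    refine Finset.sum_congr rfl fun i hi => ?_
    rw [← C_mul_X_pow_eq_monomial, pow_add]
    ring
  rw [h1, h2, ← Finset.sum_sub_distrib]
  refine Finset.dvd_sum fun i hi => ?_
  have hi' : i ≤ d := by have := Finset.mem_range.mp hi; omega
  rw [← mul_sub]
  refine Dvd.dvd.mul_left ?_ _
  have he : (n - 1) * d + i = (n - 1) * (d - i) + i * n := arith n d i hn hi'
  rw [he]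
  exact dvd_sub_comm.mp (dvd_X_pow_sub_X_pow n ((n - 1) * (d - i)) i)

/-- Composition with `X^(n-1)` respects congruence mod `X^n - 1`. -/
lemma dvd_comp_sub (n : ℕ) (hn : 0 < n) {f g : R[X]}
    (h : (X ^ n - 1 : R[X]) ∣ f - g) :
    (X ^ n - 1 : R[X]) ∣ f.comp (X ^ (n - 1)) - g.comp (X ^ (n - 1)) := by
  obtain ⟨q, hq⟩ := h
  have : f.comp (X ^ (n - 1)) - g.comp (X ^ (n - 1))
      = ((X ^ n - 1 : R[X]).comp (X ^ (n - 1))) * q.comp (X ^ (n - 1)) := by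
    rw [← mul_comp, ← hq, sub_comp]
  rw [this]
  refine Dvd.dvd.mul_right ?_ _
  rw [sub_comp, X_pow_comp, one_comp, ← pow_mul]
  obtain ⟨m, hm⟩ : ∃ m, (n - 1) * n = 0 + m * n := ⟨n - 1, by ring⟩
  rw [hm]
  simpa using dvd_X_pow_sub_X_pow (R := R) n 0 m

variable [Nontrivial R]

lemma monic_N (n : ℕ) (hn : 0 < n) : Monic (X ^ n - 1 : R[X]) := by
  have := monic_X_pow_sub_C (1 : R) hn.ne'
  simpa using this

lemma natDegree_mod_le (n : ℕ) (hn : 0 < n) (p : R[X]) :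
    (p %ₘ (X ^ n - 1 : R[X])).natDegree ≤ n - 1 := by
  by_cases h0 : p %ₘ (X ^ n - 1 : R[X]) = 0
  · simp [h0]
  · have hlt := degree_modByMonic_lt p (monic_N n hn)
    have hdeg : degree (X ^ n - 1 : R[X]) = (n : WithBot ℕ) := by
      have := degree_X_pow_sub_C hn (1 : R)
      simpa using this
    rw [hdeg] at hlt
    have := (natDegree_lt_iff_degree_lt h0).mpr hlt
    omega

/-- Taking the coefficient at `n-1` commutes with `%ₘ (X^n - 1)` for
polynomials of degree at most `2n-2`. -/
lemma coeff_mod_eq (n : ℕ) (hn : 0 < n) (P : R[X]) (hP : P.natDegree ≤ 2 * n - 2) :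
    (P %ₘ (X ^ n - 1 : R[X])).coeff (n - 1) = P.coeff (n - 1) := by
  have hmon := monic_N (R := R) n hn
  have hdiv := modByMonic_add_div P (X ^ n - 1 : R[X])
  set q := P /ₘ (X ^ n - 1 : R[X]) with hq
  have hcoeff : ((X ^ n - 1 : R[X]) * q).coeff (n - 1) = 0 := by
    have hq0 : q.coeff (n - 1) = 0 := by
      by_cases hq' : q = 0
      · simp [hq']
      · refine coeff_eq_zero_of_natDegree_lt ?_
        have hnd : ((X ^ n - 1 : R[X]) * q).natDegree
            = (X ^ n - 1 : R[X]).natDegree + q.natDegree := hmon.natDegree_mul' hq'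
        have hNn : (X ^ n - 1 : R[X]).natDegree = n := by
          have : (X ^ n - C (1 : R)).natDegree = n := natDegree_X_pow_sub_C
          simpa using this
        have hsub : (X ^ n - 1 : R[X]) * q = P - P %ₘ (X ^ n - 1 : R[X]) :=
          eq_sub_of_add_eq' hdiv
        have hb2 : ((X ^ n - 1 : R[X]) * q).natDegree ≤ 2 * n - 2 := by
          rw [hsub]
          exact le_trans (natDegree_sub_le _ _)
            (max_le hP (le_trans (natDegree_mod_le n hn P) (by omega)))
        rw [hnd, hNn] at hb2
        omega
    have : (X ^ n - 1 : R[X]) * q = q * X ^ n - q := by ring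
    rw [this, coeff_sub, coeff_mul_X_pow', if_neg (by omega), hq0, sub_zero]
  calc (P %ₘ (X ^ n - 1 : R[X])).coeff (n - 1)
      = (P %ₘ (X ^ n - 1 : R[X])).coeff (n - 1) + ((X ^ n - 1 : R[X]) * q).coeff (n - 1) := by
        rw [hcoeff, add_zero]
    _ = P.coeff (n - 1) := by rw [← coeff_add, hdiv]

/-- The key identity: the star product equals a coefficient of a reduction of a
multiple of `a*b`. -/
lemma main_dot (n : ℕ) (hn : 0 < n) (a b u v : R[X]) (hdb : b.natDegree ≤ n - 1) :
    ∑ i ∈ Finset.range n,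
        ((u * a) %ₘ (X ^ n - 1)).coeff i * ((v * b.reverse) %ₘ (X ^ n - 1)).coeff i
      = ((X ^ ((n - 1) * (b.natDegree + 1)) * (u * v.comp (X ^ (n - 1)) * (a * b)))
          %ₘ (X ^ n - 1 : R[X])).coeff (n - 1) := by
  have hmon := monic_N (R := R) n hn
  have hBdeg : ((v * b.reverse) %ₘ (X ^ n - 1 : R[X])).natDegree ≤ n - 1 :=
    natDegree_mod_le n hn _
  have hAdeg : ((u * a) %ₘ (X ^ n - 1 : R[X])).natDegree ≤ n - 1 :=
    natDegree_mod_le n hn _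
  have hrefl : (reflect (n - 1) ((v * b.reverse) %ₘ (X ^ n - 1 : R[X]))).natDegree ≤ n - 1 := by
    rw [natDegree_le_iff_coeff_eq_zero]
    intro k hk
    rw [coeff_reflect, revAt_eq_self_of_lt hk]
    exact coeff_eq_zero_of_natDegree_lt (lt_of_le_of_lt hBdeg hk)
  have hmul : (((u * a) %ₘ (X ^ n - 1 : R[X]))
      * reflect (n - 1) ((v * b.reverse) %ₘ (X ^ n - 1 : R[X]))).natDegree ≤ 2 * n - 2 :=
    le_trans natDegree_mul_le (by omega)
  have hdvd : (X ^ n - 1 : R[X]) ∣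
      ((u * a) %ₘ (X ^ n - 1 : R[X]))
        * reflect (n - 1) ((v * b.reverse) %ₘ (X ^ n - 1 : R[X]))
      - X ^ ((n - 1) * (b.natDegree + 1)) * (u * v.comp (X ^ (n - 1)) * (a * b)) := by
    rw [← Ideal.mem_span_singleton (α := R[X]), ← Ideal.Quotient.mk_eq_mk_iff_sub_mem]
    set π := Ideal.Quotient.mk (Ideal.span {(X ^ n - 1 : R[X])}) with hπ
    have key : ∀ f g : R[X], (X ^ n - 1 : R[X]) ∣ f - g → π f = π g := fun f g h =>
      (Ideal.Quotient.mk_eq_mk_iff_sub_mem f g).mpr (Ideal.mem_span_singleton.mpr h)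
    have e0 : π ((u * a) %ₘ (X ^ n - 1 : R[X])) = π (u * a) := by
      refine key _ _ (dvd_sub_comm.mp ?_)
      exact ⟨(u * a) /ₘ (X ^ n - 1 : R[X]),
        (eq_sub_of_add_eq' (modByMonic_add_div (u * a) (X ^ n - 1 : R[X]))).symm⟩
    have eB : (X ^ n - 1 : R[X]) ∣ (v * b.reverse) - (v * b.reverse) %ₘ (X ^ n - 1 : R[X]) :=
      ⟨(v * b.reverse) /ₘ (X ^ n - 1 : R[X]),
        (eq_sub_of_add_eq' (modByMonic_add_div (v * b.reverse) (X ^ n - 1 : R[X]))).symm⟩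
    have e1 : π (reflect (n - 1) ((v * b.reverse) %ₘ (X ^ n - 1 : R[X])))
        = π (X ^ (n - 1)) * π (((v * b.reverse) %ₘ (X ^ n - 1 : R[X])).comp (X ^ (n - 1))) := by
      rw [← map_mul]
      exact key _ _ (dvd_reflect_sub n hn _ hBdeg)
    have e2 : π (((v * b.reverse) %ₘ (X ^ n - 1 : R[X])).comp (X ^ (n - 1)))
        = π ((v * b.reverse).comp (X ^ (n - 1))) :=
      key _ _ (dvd_comp_sub n hn (dvd_sub_comm.mp eB))
    have e4 : π (b.reverse.comp (X ^ (n - 1)))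
        = π (X ^ ((n - 1) * b.natDegree)) * π b := by
      rw [← map_mul]
      exact key _ _ (dvd_reverse_comp_sub n hn b hdb)
    have e2' : π ((v * b.reverse).comp (X ^ (n - 1)))
        = π (v.comp (X ^ (n - 1))) * π (b.reverse.comp (X ^ (n - 1))) := by
      rw [mul_comp, map_mul]
    have epow : π (X ^ ((n - 1) * (b.natDegree + 1)))
        = π (X ^ (n - 1)) * π (X ^ ((n - 1) * b.natDegree)) := by
      rw [← map_mul, ← pow_add,
        show (n - 1) * (b.natDegree + 1) = (n - 1) + (n - 1) * b.natDegree by ring]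
    rw [map_mul, e0, e1, e2, e2', e4]
    simp only [map_mul]
    rw [epow]
    ring
  rw [dot_eq_coeff n hn, ← coeff_mod_eq n hn _ hmul, modByMonic_eq_of_dvd_sub hmon hdvd]

/-- Extracting a coefficient of `p %ₘ (X^n - 1)` as the `(n-1)`-st coefficient of a
shifted reduction. -/
lemma coeff_extract (n : ℕ) (hn : 0 < n) (p : R[X]) (m j : ℕ) (hj : j ≤ n - 1) :
    ((X ^ (m * n + (n - 1 - j)) * p) %ₘ (X ^ n - 1 : R[X])).coeff (n - 1)
      = (p %ₘ (X ^ n - 1 : R[X])).coeff j := by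
  have hmon := monic_N (R := R) n hn
  have hpC : (X ^ n - 1 : R[X]) ∣ p - p %ₘ (X ^ n - 1 : R[X]) :=
    ⟨p /ₘ (X ^ n - 1 : R[X]), (eq_sub_of_add_eq' (modByMonic_add_div p (X ^ n - 1 : R[X]))).symm⟩
  have hXX : (X ^ n - 1 : R[X]) ∣ X ^ (m * n + (n - 1 - j)) - X ^ (n - 1 - j) := by
    have := dvd_X_pow_sub_X_pow (R := R) n (n - 1 - j) m
    rwa [Nat.add_comm] at this
  have h1 : (X ^ n - 1 : R[X]) ∣ X ^ (m * n + (n - 1 - j)) * p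
      - X ^ (n - 1 - j) * (p %ₘ (X ^ n - 1 : R[X])) := by
    have hsplit : X ^ (m * n + (n - 1 - j)) * p
        - X ^ (n - 1 - j) * (p %ₘ (X ^ n - 1 : R[X]))
        = (X ^ (m * n + (n - 1 - j)) - X ^ (n - 1 - j)) * p
          + X ^ (n - 1 - j) * (p - p %ₘ (X ^ n - 1 : R[X])) := by ring
    rw [hsplit]
    exact dvd_add (hXX.mul_right p) (hpC.mul_left _)
  have hdeg : (X ^ (n - 1 - j) * (p %ₘ (X ^ n - 1 : R[X]))).natDegree ≤ 2 * n - 2 := by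
    refine le_trans natDegree_mul_le ?_
    have := natDegree_mod_le (R := R) n hn p
    rw [natDegree_X_pow]
    omega
  rw [modByMonic_eq_of_dvd_sub hmon h1, coeff_mod_eq n hn _ hdeg, mul_comm,
    coeff_mul_X_pow', if_pos (by omega)]
  congr 1
  omega

end DvdStarAux

/-- Over a finite chain ring `R`, for nonzero polynomials `a, b` of degree
at most `n-1`, `x^n - 1` divides `a·b` iff `(u(x̄)a(x̄)) ⋆ (v(x̄)b*(x̄)) = 0` for all `u, v`,
where `⋆` is the coefficientwise dot product of the canonical representatives modulo
`x^n - 1` and `b*` is the reciprocal polynomial of `b`. -/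
theorem dvd_iff_star_reciprocal_eq_zero
    (R : Type*) [CommRing R]
    [IsLocalRing R] [IsPrincipalIdealRing R] [Finite R]
    (n : ℕ) (hn : 0 < n)
    (a b : R[X]) (ha : a ≠ 0) (hb : b ≠ 0)
    (hda : a.natDegree ≤ n - 1) (hdb : b.natDegree ≤ n - 1) :
    (X ^ n - 1 ∣ a * b) ↔
      ∀ u v : R[X],
        ∑ i ∈ Finset.range n,
          ((u * a) %ₘ (X ^ n - 1)).coeff i * ((v * b.reverse) %ₘ (X ^ n - 1)).coeff i = 0 := by
  have hmon := DvdStarAux.monic_N (R := R) n hn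
  constructor
  · intro h u v
    rw [DvdStarAux.main_dot n hn a b u v hdb]
    have hdvd : (X ^ n - 1 : R[X]) ∣
        X ^ ((n - 1) * (b.natDegree + 1)) * (u * v.comp (X ^ (n - 1)) * (a * b)) :=
      h.trans ⟨X ^ ((n - 1) * (b.natDegree + 1)) * (u * v.comp (X ^ (n - 1))), by ring⟩
    rw [(modByMonic_eq_zero_iff_dvd hmon).mpr hdvd]
    simp
  · intro h
    rw [← modByMonic_eq_zero_iff_dvd hmon]
    refine Polynomial.ext fun j => ?_
    simp only [coeff_zero]
    by_cases hj : j ≤ n - 1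
    · have hd := h (X ^ ((b.natDegree + 1) + (n - 1 - j))) 1
      rw [DvdStarAux.main_dot n hn a b _ 1 hdb] at hd
      have hpoly : X ^ ((n - 1) * (b.natDegree + 1))
          * (X ^ ((b.natDegree + 1) + (n - 1 - j)) * (1 : R[X]).comp (X ^ (n - 1)) * (a * b))
          = X ^ ((b.natDegree + 1) * n + (n - 1 - j)) * (a * b) := by
        rw [one_comp, mul_one, ← mul_assoc, ← pow_add]
        congr 2
        obtain ⟨m, hm⟩ : ∃ m, n = m + 1 := ⟨n - 1, by omega⟩
        subst hm
        simp only [Nat.add_sub_cancel]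
        ring
      rw [hpoly, DvdStarAux.coeff_extract n hn (a * b) (b.natDegree + 1) j hj] at hd
      exact hd
    · exact coeff_eq_zero_of_natDegree_lt
        (lt_of_le_of_lt (DvdStarAux.natDegree_mod_le n hn _) (by omega))
end

section
/- Let C and D be R-submodules of S^n. Then (C + D)^{⊥Tr} = C^{⊥Tr} ∩ D^{⊥Tr} and C^{⊥Tr} + D^{⊥Tr} = (C ∩ D)^{⊥Tr}. -/
set_option linter.unusedSectionVars false

open IsLocalRing

section Chain
variable {R : Type*} [CommRing R] [IsLocalRing R] [IsPrincipalIdealRing R] [Finite R]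

lemma cr_exists_pi :
    ∃ (π : R) (e : ℕ), Ideal.span {π} = maximalIdeal R ∧ π ^ e = 0 ∧ ∀ m < e, π ^ m ≠ 0 := by
  obtain ⟨π, hπ⟩ := (IsPrincipalIdealRing.principal (maximalIdeal R)).principal
  have : IsArtinianRing R := inferInstance
  obtain ⟨N, hN⟩ := IsArtinianRing.isNilpotent_jacobson_bot (R := R)
  have hjac : Ideal.jacobson (⊥ : Ideal R) = maximalIdeal R :=
    IsLocalRing.jacobson_eq_maximalIdeal ⊥ bot_ne_top
  have hπN : π ^ N = 0 := by
    have hmem : π ∈ maximalIdeal R := by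
      rw [hπ]; exact Ideal.mem_span_singleton_self π
    have : π ^ N ∈ (maximalIdeal R) ^ N := Ideal.pow_mem_pow hmem N
    rw [← hjac, hN] at this
    simpa using this
  have hex : ∃ e, π ^ e = 0 := ⟨N, hπN⟩
  classical
  refine ⟨π, Nat.find hex, hπ.symm, Nat.find_spec hex, fun m hm => Nat.find_min hex hm⟩

end Chain

section Chain2
variable {R : Type*} [CommRing R] [IsLocalRing R] [IsPrincipalIdealRing R] [Finite R]
variable {π : R} {e : ℕ} (hspan : Ideal.span {π} = maximalIdeal R)
  (hnil : π ^ e = 0) (hmin : ∀ m < e, π ^ m ≠ 0)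

include hspan hnil hmin

lemma cr_decomp : ∀ x : R, x ≠ 0 → ∃ (u : Rˣ) (k : ℕ), k < e ∧ x = ↑u * π ^ k := by
  classical
  intro x hx
  have hex : ∃ k, x ∉ Ideal.span {π ^ k} := by
    refine ⟨e, ?_⟩
    rw [hnil]
    simp only [Ideal.span_singleton_eq_bot.mpr rfl]
    simpa using hx
  set K := Nat.find hex with hK
  have hK1 : 1 ≤ K := by
    rcases Nat.eq_zero_or_pos K with h0 | h1
    · exfalso
      have := Nat.find_spec hex
      rw [← hK, h0] at this
      simp at this
    · exact h1
  have hmem : x ∈ Ideal.span {π ^ (K - 1)} := by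
    by_contra hc
    have : K ≤ K - 1 := Nat.find_le hc
    omega
  obtain ⟨c, hc⟩ := Ideal.mem_span_singleton'.mp hmem
  have hcu : IsUnit c := by
    by_contra hcu
    have hcm : c ∈ maximalIdeal R := hcu
    rw [← hspan] at hcm
    obtain ⟨d, hd⟩ := Ideal.mem_span_singleton'.mp hcm
    have : x ∈ Ideal.span {π ^ K} := by
      refine Ideal.mem_span_singleton'.mpr ⟨d, ?_⟩
      rw [← hc, ← hd]
      have hKe : π ^ K = π * π ^ (K - 1) := by
        rw [← pow_succ']
        congr 1
        omega
      rw [hKe]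
      ring
    exact absurd this (Nat.find_spec hex)
  have hlt : K - 1 < e := by
    by_contra hge
    have : π ^ (K - 1) = 0 := by
      have : K - 1 = e + (K - 1 - e) := by omega
      rw [this, pow_add, hnil, zero_mul]
    rw [this, mul_zero] at hc
    exact hx hc.symm
  exact ⟨hcu.unit, K - 1, hlt, by rw [← hc, IsUnit.unit_spec]⟩

lemma cr_ann : ∀ k ≤ e, ∀ x : R, x * π ^ k = 0 ↔ x ∈ Ideal.span {π ^ (e - k)} := by
  intro k hk x
  constructor
  · intro hxk
    rcases eq_or_ne x 0 with rfl | hx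
    · exact Ideal.zero_mem _
    obtain ⟨u, j, hj, rfl⟩ := cr_decomp hspan hnil hmin x hx
    have hpow : π ^ (j + k) = 0 := by
      have h2 : (↑u⁻¹ : R) * (↑u * π ^ j * π ^ k) = 0 := by rw [hxk, mul_zero]
      rwa [← mul_assoc, ← mul_assoc, Units.inv_mul, one_mul, ← pow_add] at h2
    have hjk : e ≤ j + k := by
      by_contra hlt
      exact hmin _ (by omega) hpow
    refine Ideal.mem_span_singleton'.mpr ⟨↑u * π ^ (j - (e - k)), ?_⟩
    rw [mul_assoc, ← pow_add]
    congr 2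
    omega
  · intro hx
    obtain ⟨c, hc⟩ := Ideal.mem_span_singleton'.mp hx
    rw [← hc, mul_assoc, ← pow_add]
    have : e - k + k = e := by omega
    rw [this, hnil, mul_zero]

lemma cr_baer : Module.Baer R R := by
  intro I f
  obtain ⟨g, hg⟩ := (IsPrincipalIdealRing.principal I).principal
  rcases eq_or_ne g 0 with rfl | hgne
  · refine ⟨0, fun x hx => ?_⟩
    have hx0 : x = 0 := by
      rw [hg] at hx
      obtain ⟨a, ha⟩ := Submodule.mem_span_singleton.mp hx
      simpa using ha.symm
    have : (⟨x, hx⟩ : I) = 0 := by ext; exact hx0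
    rw [this, map_zero]
    simp
  obtain ⟨u, k, hk, hgu⟩ := cr_decomp hspan hnil hmin g hgne
  have hgI : g ∈ I := by rw [hg]; exact Ideal.mem_span_singleton_self g
  set x := f ⟨g, hgI⟩ with hxdef
  have hxann : x * π ^ (e - k) = 0 := by
    have h1 : ((π ^ (e - k) : R) • (⟨g, hgI⟩ : I)) = 0 := by
      ext
      show (π ^ (e - k) : R) * g = 0
      rw [hgu, mul_comm (↑u) (π ^ k), ← mul_assoc, ← pow_add]
      have : e - k + k = e := by omega
      rw [this, hnil, zero_mul]
    calc x * π ^ (e - k) = π ^ (e - k) * x := mul_comm _ _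
      _ = π ^ (e - k) • f ⟨g, hgI⟩ := rfl
      _ = f ((π ^ (e - k) : R) • ⟨g, hgI⟩) := (map_smul f _ _).symm
      _ = 0 := by rw [h1, map_zero]
  have hxmem : x ∈ Ideal.span {π ^ (e - (e - k))} :=
    (cr_ann hspan hnil hmin (e - k) (by omega) x).mp hxann
  have hek : e - (e - k) = k := by omega
  rw [hek] at hxmem
  obtain ⟨c, hc⟩ := Ideal.mem_span_singleton'.mp hxmem
  set y := c * ↑u⁻¹ with hy
  refine ⟨LinearMap.toSpanSingleton R R y, fun z hz => ?_⟩
  have hz' : z ∈ Ideal.span {g} := by show z ∈ Submodule.span R {g}; rw [← hg]; exact hz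
  obtain ⟨d, hd⟩ := Ideal.mem_span_singleton'.mp hz'
  have hsub : (⟨z, hz⟩ : I) = d • ⟨g, hgI⟩ := by ext; exact hd.symm
  have : f ⟨z, hz⟩ = d • x := by
    rw [hsub, map_smul, hxdef]
  rw [this]
  show z • y = d • x
  rw [← hd, ← hc, hgu]
  simp only [smul_eq_mul, hy]
  have hu : (↑u : R) * ↑u⁻¹ = 1 := Units.mul_inv u
  linear_combination (d * π ^ k * c) * hu

lemma cr_card_hom_cyclic (k : ℕ) (hk : k ≤ e) :
    Nat.card ((R ⧸ Ideal.span {π ^ k}) →ₗ[R] R) = Nat.card (R ⧸ Ideal.span {π ^ k}) := by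
  set I : Ideal R := Ideal.span {π ^ k} with hI
  set J : Ideal R := Ideal.span {π ^ (e - k)} with hJ
  have hJk : ∀ y : R, y ∈ J → y * π ^ k = 0 := fun y hy =>
    (cr_ann hspan hnil hmin k hk y).mpr hy
  have hle : ∀ y : R, y ∈ J → I ≤ LinearMap.ker (LinearMap.toSpanSingleton R R y) := by
    intro y hy z hz
    obtain ⟨c, hc⟩ := Ideal.mem_span_singleton'.mp hz
    show z • y = 0
    rw [smul_eq_mul, ← hc, mul_assoc, mul_comm (π ^ k) y, hJk y hy, mul_zero]
  have E1 : ((R ⧸ I) →ₗ[R] R) ≃ J := by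
    refine ⟨fun f => ⟨f (Submodule.Quotient.mk 1), ?_⟩,
      fun y => Submodule.liftQ I (LinearMap.toSpanSingleton R R ↑y) (hle y y.2), ?_, ?_⟩
    · refine (cr_ann hspan hnil hmin k hk _).mp ?_
      have h0 : (Submodule.Quotient.mk (π ^ k) : R ⧸ I) = 0 := by
        rw [Submodule.Quotient.mk_eq_zero]
        exact Ideal.mem_span_singleton_self _
      calc f (Submodule.Quotient.mk 1) * π ^ k
          = π ^ k • f (Submodule.Quotient.mk 1) := by rw [smul_eq_mul, mul_comm]
        _ = f (π ^ k • (Submodule.Quotient.mk 1 : R ⧸ I)) := (map_smul f _ _).symm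
        _ = f (Submodule.Quotient.mk (π ^ k)) := by
            congr 1
            rw [← Submodule.Quotient.mk_smul, smul_eq_mul, mul_one]
        _ = 0 := by rw [h0, map_zero]
    · intro f
      apply LinearMap.ext
      intro z
      obtain ⟨r, rfl⟩ := Submodule.Quotient.mk_surjective I z
      show r • f (Submodule.Quotient.mk 1) = f (Submodule.Quotient.mk r)
      rw [← map_smul]
      congr 1
      rw [← Submodule.Quotient.mk_smul, smul_eq_mul, mul_one]
    · intro y
      ext
      show (1 : R) • (y : R) = y
      rw [one_smul]
  rw [Nat.card_congr E1]
  have E2 : (R ⧸ I) ≃ J := by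
    have htor : Ideal.torsionOf R R (π ^ (e - k)) = I := by
      ext c
      rw [Ideal.mem_torsionOf_iff, smul_eq_mul]
      have := cr_ann hspan hnil hmin (e - k) (by omega) c
      rw [show e - (e - k) = k by omega] at this
      exact this
    have := (Ideal.quotTorsionOfEquivSpanSingleton R R (π ^ (e - k))).toEquiv
    rw [htor] at this
    exact this
  rw [Nat.card_congr E2.symm]

end Chain2

section HomCard
variable {R : Type*} [CommRing R] [IsLocalRing R] [IsPrincipalIdealRing R] [Finite R]

instance finite_linearMap {M N : Type*} [AddCommGroup M] [Module R M] [Finite M]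
    [AddCommGroup N] [Module R N] [Finite N] : Finite (M →ₗ[R] N) :=
  Finite.of_injective (fun f => (f : M → N)) DFunLike.coe_injective

variable {π : R} {e : ℕ} (hspan : Ideal.span {π} = maximalIdeal R)
  (hnil : π ^ e = 0) (hmin : ∀ m < e, π ^ m ≠ 0)

include hspan hnil hmin in
lemma cr_card_hom : ∀ (c : ℕ) (M : Type*) [AddCommGroup M] [Module R M] [Finite M],
    Nat.card M = c → Nat.card (M →ₗ[R] R) = c := by
  have baer : Module.Baer R R := cr_baer hspan hnil hmin
  intro c
  induction c using Nat.strong_induction_on with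
  | _ c ih =>
    intro M _ _ _ hc
    by_cases hM : ∀ x : M, x = 0
    · haveI : Subsingleton M := ⟨fun a b => by rw [hM a, hM b]⟩
      haveI : Subsingleton (M →ₗ[R] R) :=
        ⟨fun f g => LinearMap.ext fun x => by rw [hM x, map_zero, map_zero]⟩
      have h1 : Nat.card M = 1 := Nat.card_eq_one_iff_unique.mpr ⟨inferInstance, ⟨0⟩⟩
      have h2 : Nat.card (M →ₗ[R] R) = 1 :=
        Nat.card_eq_one_iff_unique.mpr ⟨inferInstance, ⟨0⟩⟩
      rw [h2, ← h1, hc]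
    · push_neg at hM
      obtain ⟨x, hx⟩ := hM
      set N : Submodule R M := Submodule.span R {x} with hN
      have hxN : x ∈ N := Submodule.mem_span_singleton_self x
      haveI : Nontrivial N := ⟨⟨⟨x, hxN⟩, 0, by simp [hx]⟩⟩
      haveI : Finite (M ⧸ N) := Quotient.finite _
      have hsplit : Nat.card M = Nat.card N * Nat.card (M ⧸ N) :=
        Submodule.card_eq_card_quotient_mul_card N
      have hQlt : Nat.card (M ⧸ N) < c := by
        rw [← hc, hsplit]
        have h2 : 1 < Nat.card N := Finite.one_lt_card
        have h3 : 0 < Nat.card (M ⧸ N) := Nat.card_pos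
        nlinarith
      set res : (M →ₗ[R] R) →ₗ[R] (N →ₗ[R] R) := LinearMap.lcomp R R N.subtype with hres
      have hsurj : Function.Surjective res := by
        intro g
        obtain ⟨h, hh⟩ := baer.extension_property N.subtype (Submodule.injective_subtype N) g
        exact ⟨h, hh⟩
      have Eker : ↥(LinearMap.ker res) ≃ ((M ⧸ N) →ₗ[R] R) := by
        refine ⟨fun f => Submodule.liftQ N f.1 ?_, fun g => ⟨g ∘ₗ N.mkQ, ?_⟩, ?_, ?_⟩
        · intro m hm
          have h0 : res f.1 = 0 := f.2
          exact LinearMap.congr_fun h0 ⟨m, hm⟩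
        · rw [LinearMap.mem_ker]
          apply LinearMap.ext
          intro nn
          have : N.mkQ (N.subtype nn) = 0 := by
            rw [Submodule.mkQ_apply, Submodule.Quotient.mk_eq_zero]
            exact nn.2
          simp only [hres, LinearMap.lcomp_apply, LinearMap.comp_apply, this, map_zero,
            LinearMap.zero_apply]
        · intro f
          apply Subtype.ext
          apply LinearMap.ext
          intro m
          rfl
        · intro g
          apply LinearMap.ext
          intro z
          obtain ⟨m, rfl⟩ := Submodule.Quotient.mk_surjective N z
          rfl
      -- card (N →ₗ R) = card N
      have hcyc : Nat.card (N →ₗ[R] R) = Nat.card N := by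
        set I : Ideal R := Ideal.torsionOf R M x with hI
        have hIk : ∃ k ≤ e, I = Ideal.span {π ^ k} := by
          obtain ⟨g, hg⟩ := (IsPrincipalIdealRing.principal I).principal
          rcases eq_or_ne g 0 with rfl | hgne
          · refine ⟨e, le_refl e, ?_⟩
            rw [hg, hnil]
          · obtain ⟨u, k, hk, rfl⟩ := cr_decomp hspan hnil hmin g hgne
            refine ⟨k, le_of_lt hk, ?_⟩
            rw [hg]
            apply le_antisymm
            · show Ideal.span {↑u * π ^ k} ≤ Ideal.span {π ^ k}
              rw [Ideal.span_singleton_le_span_singleton]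
              exact ⟨u, by ring⟩
            · show Ideal.span {π ^ k} ≤ Ideal.span {↑u * π ^ k}
              rw [Ideal.span_singleton_le_span_singleton]
              exact ⟨↑u⁻¹, by rw [mul_comm (↑u : R) (π ^ k), mul_assoc, Units.mul_inv, mul_one]⟩
        obtain ⟨k, hk, hIeq⟩ := hIk
        have equivN : (R ⧸ I) ≃ₗ[R] N := Ideal.quotTorsionOfEquivSpanSingleton R M x
        have Ehom : (N →ₗ[R] R) ≃ ((R ⧸ I) →ₗ[R] R) := by
          refine ⟨fun f => f ∘ₗ equivN.toLinearMap, fun g => g ∘ₗ equivN.symm.toLinearMap, ?_, ?_⟩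
          · intro f
            apply LinearMap.ext
            intro m
            simp
          · intro g
            apply LinearMap.ext
            intro m
            simp
        rw [Nat.card_congr Ehom, ← Nat.card_congr equivN.toEquiv, hIeq]
        exact cr_card_hom_cyclic hspan hnil hmin k hk
      -- assemble
      have h1 : Nat.card (M →ₗ[R] R)
          = Nat.card (LinearMap.ker res) * Nat.card ((M →ₗ[R] R) ⧸ LinearMap.ker res) :=
        Submodule.card_eq_card_quotient_mul_card _
      have h2 : Nat.card ((M →ₗ[R] R) ⧸ LinearMap.ker res) = Nat.card (N →ₗ[R] R) := by
        have e1 := res.quotKerEquivRange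
        have e2 : LinearMap.range res = ⊤ := LinearMap.range_eq_top.mpr hsurj
        rw [Nat.card_congr e1.toEquiv, e2]
        exact Nat.card_congr Submodule.topEquiv.toEquiv
      have h3 : Nat.card (LinearMap.ker res) = Nat.card (M ⧸ N) := by
        rw [Nat.card_congr Eker]
        exact ih _ hQlt (M ⧸ N) rfl
      rw [h1, h2, h3, hcyc, mul_comm, ← hsplit, hc]  -- may need reorder

end HomCard

lemma submod_eq_of_le_of_card_le {R M : Type*} [Ring R] [AddCommGroup M] [Module R M] [Finite M]
    {p q : Submodule R M} (h : p ≤ q) (hc : Nat.card q ≤ Nat.card p) : p = q := by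
  apply SetLike.ext'
  apply Set.eq_of_subset_of_ncard_le h
  rw [← Nat.card_coe_set_eq, ← Nat.card_coe_set_eq]
  exact hc

/-- For `R`-submodules `C, D ⊆ S^n`:
`(C + D)^⊥Tr = C^⊥Tr ∩ D^⊥Tr` and `C^⊥Tr + D^⊥Tr = (C ∩ D)^⊥Tr`. -/
theorem traceDual_sup_inf
    (R S : Type*) [CommRing R] [CommRing S]
    [IsLocalRing R] [IsLocalRing S]
    [IsPrincipalIdealRing R] [IsPrincipalIdealRing S]
    [Finite R] [Finite S] [Algebra R S]
    (hinj : Function.Injective (algebraMap R S))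
    (hmR : (IsLocalRing.maximalIdeal S).comap (algebraMap R S) = IsLocalRing.maximalIdeal R)
    [Module.Free R S] (hrk : Module.finrank R S = 2)
    (hmS : IsLocalRing.maximalIdeal S
        = Ideal.map (algebraMap R S) (IsLocalRing.maximalIdeal R))
    (φ : S ≃ₐ[R] S) (hφ2 : ∀ s, φ (φ s) = s) (hφne : φ ≠ (AlgEquiv.refl : S ≃ₐ[R] S))
    (hfix : ∀ s : S, φ s = s ↔ s ∈ (algebraMap R S).range)
    (h2 : IsUnit (2 : R))
    (Tr : S →ₗ[R] R) (hTr : ∀ s, algebraMap R S (Tr s) = s + φ s)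
    (hTrsurj : Function.Surjective Tr)
    (n : ℕ) (Cc Dc : Submodule R (Fin n → S)) :
    traceDual Tr (Cc ⊔ Dc) = traceDual Tr Cc ⊓ traceDual Tr Dc ∧
      traceDual Tr Cc ⊔ traceDual Tr Dc = traceDual Tr (Cc ⊓ Dc) := by
  classical
  obtain ⟨π, e, hspan, hnil, hmin⟩ := cr_exists_pi (R := R)
  have baer : Module.Baer R R := cr_baer hspan hnil hmin
  -- nondegeneracy of the trace pairing on S
  have hunit : ∃ s : S, IsUnit (s - φ s) := by
    by_contra hcon
    push_neg at hcon
    have hmem : ∀ s : S, s - φ s ∈ maximalIdeal S := fun s =>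
      (IsLocalRing.mem_maximalIdeal _).mpr (mem_nonunits_iff.mpr (hcon s))
    -- surjectivity of the residue map R/m_R → S/m_S
    have hle : maximalIdeal R ≤ (maximalIdeal S).comap (algebraMap R S) := hmR.ge
    set qmap := Ideal.quotientMap (maximalIdeal S) (algebraMap R S) hle with hqmap
    have hc2 : (2 : S) * algebraMap R S (↑h2.unit⁻¹) = 1 := by
      have h2map : ((2 : S)) = algebraMap R S (2 : R) := by
        rw [map_ofNat]
      rw [h2map, ← map_mul, ← map_one (algebraMap R S)]
      congr 1
      simpa using h2.unit.mul_inv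
    have hqsurj : Function.Surjective qmap := by
      intro y
      obtain ⟨s, rfl⟩ := Ideal.Quotient.mk_surjective y
      refine ⟨Ideal.Quotient.mk _ (Tr s * ↑h2.unit⁻¹), ?_⟩
      rw [hqmap, Ideal.quotientMap_mk, Ideal.Quotient.eq]
      have key : algebraMap R S (Tr s * ↑h2.unit⁻¹) - s
          = - (algebraMap R S (↑h2.unit⁻¹) * (s - φ s)) := by
        rw [map_mul, hTr s]
        linear_combination s * hc2
      rw [key]
      exact neg_mem (Ideal.mul_mem_left _ _ (hmem s))
    haveI : Finite (R ⧸ maximalIdeal R) := Quotient.finite _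
    haveI : Finite (S ⧸ maximalIdeal S) := Quotient.finite _
    have hQle : Nat.card (S ⧸ maximalIdeal S) ≤ Nat.card (R ⧸ maximalIdeal R) :=
      Nat.card_le_card_of_surjective qmap hqsurj
    -- cardinality computations
    let b : Module.Basis (Fin 2) R S := (Module.finBasis R S).reindex (finCongr hrk)
    have cardS : Nat.card S = Nat.card R ^ 2 := by
      rw [Nat.card_congr b.equivFun.toEquiv, Nat.card_pi]
      simp [sq]
    have hrs : (Submodule.restrictScalars R (maximalIdeal S) : Submodule R S)
        = (maximalIdeal R) • (⊤ : Submodule R S) := by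
      rw [Ideal.smul_top_eq_map, hmS]
    have hmemiff : ∀ x : S, x ∈ maximalIdeal S ↔ x ∈ (maximalIdeal R) • (⊤ : Submodule R S) := by
      intro x
      rw [← hrs]
      exact Iff.rfl
    have e0 : ↥(maximalIdeal S) ≃ ↥((maximalIdeal R) • (⊤ : Submodule R S)) :=
      ⟨fun x => ⟨x.1, (hmemiff x.1).mp x.2⟩, fun x => ⟨x.1, (hmemiff x.1).mpr x.2⟩,
        fun _ => rfl, fun _ => rfl⟩
    have e1 : ↥((maximalIdeal R) • (⊤ : Submodule R S))
        ≃ ↥(Submodule.map (b.equivFun.toLinearMap) ((maximalIdeal R) • (⊤ : Submodule R S))) :=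
      (Submodule.equivMapOfInjective _ b.equivFun.injective _).toEquiv
    have hmp : Submodule.map (b.equivFun.toLinearMap) ((maximalIdeal R) • (⊤ : Submodule R S))
        = Submodule.pi Set.univ (fun _ : Fin 2 => (maximalIdeal R : Submodule R R)) := by
      rw [Submodule.map_smul'']
      have htop : Submodule.map (b.equivFun.toLinearMap) (⊤ : Submodule R S) = ⊤ := by
        rw [Submodule.map_top, LinearEquiv.range]
      rw [htop]
      apply le_antisymm
      · rw [Submodule.smul_le]
        intro r hr m _
        rw [Submodule.mem_pi]
        intro i _
        show r * m i ∈ maximalIdeal R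
        exact Ideal.mul_mem_right (m i) _ hr
      · intro m hm
        rw [Submodule.mem_pi] at hm
        rw [pi_eq_sum_univ m]
        apply Submodule.sum_mem
        intro j _
        exact Submodule.smul_mem_smul (hm j (Set.mem_univ j)) Submodule.mem_top
    have e3 : ↥(Submodule.map (b.equivFun.toLinearMap) ((maximalIdeal R) • (⊤ : Submodule R S)))
        ≃ ↥(Submodule.pi Set.univ (fun _ : Fin 2 => (maximalIdeal R : Submodule R R))) :=
      Equiv.cast (by rw [hmp])
    have e2 : ↥(Submodule.pi Set.univ (fun _ : Fin 2 => (maximalIdeal R : Submodule R R)))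
        ≃ (Fin 2 → ↥(maximalIdeal R)) :=
      ⟨fun x i => ⟨x.1 i, x.2 i (Set.mem_univ i)⟩,
        fun y => ⟨fun i => (y i).1, fun i _ => (y i).2⟩,
        fun x => rfl, fun y => rfl⟩
    have cardmS : Nat.card ↥(maximalIdeal S) = Nat.card ↥(maximalIdeal R) ^ 2 := by
      rw [Nat.card_congr ((e0.trans e1).trans (e3.trans e2)), Nat.card_pi]
      simp [sq]
    have cardR : Nat.card R = Nat.card ↥(maximalIdeal R) * Nat.card (R ⧸ maximalIdeal R) :=
      Submodule.card_eq_card_quotient_mul_card _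
    have cardS2 : Nat.card S = Nat.card ↥(maximalIdeal S) * Nat.card (S ⧸ maximalIdeal S) :=
      Submodule.card_eq_card_quotient_mul_card _
    haveI : Nontrivial (R ⧸ maximalIdeal R) :=
      Ideal.Quotient.nontrivial_iff.mpr (Ideal.IsMaximal.ne_top (IsLocalRing.maximalIdeal.isMaximal R))
    have ha : 0 < Nat.card ↥(maximalIdeal R) := Nat.card_pos
    have hq : 2 ≤ Nat.card (R ⧸ maximalIdeal R) := Finite.one_lt_card
    have h5 : Nat.card ↥(maximalIdeal R) ^ 2 * Nat.card (S ⧸ maximalIdeal S)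
        = Nat.card ↥(maximalIdeal R) ^ 2 * Nat.card (R ⧸ maximalIdeal R) ^ 2 := by
      calc Nat.card ↥(maximalIdeal R) ^ 2 * Nat.card (S ⧸ maximalIdeal S)
          = Nat.card S := by rw [cardS2, cardmS]
        _ = (Nat.card ↥(maximalIdeal R) * Nat.card (R ⧸ maximalIdeal R)) ^ 2 := by
            rw [cardS, cardR]
        _ = Nat.card ↥(maximalIdeal R) ^ 2 * Nat.card (R ⧸ maximalIdeal R) ^ 2 := by ring
    have h6 : Nat.card (S ⧸ maximalIdeal S) = Nat.card (R ⧸ maximalIdeal R) ^ 2 :=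
      Nat.eq_of_mul_eq_mul_left (by positivity) h5
    rw [h6] at hQle
    nlinarith
  have ndg : ∀ x : S, (∀ s : S, Tr (x * s) = 0) → x = 0 := by
    intro x hx
    have hconj : ∀ s : S, x * s + φ (x * s) = 0 := by
      intro s
      have h1 := hTr (x * s)
      rw [hx s, map_zero] at h1
      exact h1.symm
    have hphix : φ x = -x := by
      have h1 := hconj 1
      rw [mul_one] at h1
      exact eq_neg_of_add_eq_zero_right h1
    have hxw : ∀ s : S, x * (s - φ s) = 0 := by
      intro s
      have h1 := hconj s
      rw [map_mul, hphix] at h1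
      calc x * (s - φ s) = x * s + (-x) * φ s := by ring
        _ = 0 := h1
    obtain ⟨s, hs⟩ := hunit
    exact (IsUnit.mul_left_eq_zero hs).mp (hxw s)
  -- the bilinear pairing on S^n
  set B : (Fin n → S) →ₗ[R] (Fin n → S) →ₗ[R] R :=
    LinearMap.mk₂ R (fun a c => Tr (∑ i, a i * c i))
      (fun m₁ m₂ nn => by
        rw [← map_add, ← Finset.sum_add_distrib]
        exact congrArg Tr (Finset.sum_congr rfl fun i _ => by
          rw [Pi.add_apply, add_mul]))
      (fun c m nn => by
        rw [← map_smul, Finset.smul_sum]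
        exact congrArg Tr (Finset.sum_congr rfl fun i _ => by
          rw [Pi.smul_apply, smul_mul_assoc]))
      (fun m n₁ n₂ => by
        rw [← map_add, ← Finset.sum_add_distrib]
        exact congrArg Tr (Finset.sum_congr rfl fun i _ => by
          rw [Pi.add_apply, mul_add]))
      (fun c m nn => by
        rw [← map_smul, Finset.smul_sum]
        exact congrArg Tr (Finset.sum_congr rfl fun i _ => by
          rw [Pi.smul_apply, mul_smul_comm])) with hB
  have hmemD : ∀ (E : Submodule R (Fin n → S)) (a : Fin n → S),
      a ∈ traceDual Tr E ↔ ∀ c ∈ E, Tr (∑ i, a i * c i) = 0 := fun E a => Iff.rfl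
  have hkerB : ∀ E : Submodule R (Fin n → S),
      traceDual Tr E = LinearMap.ker ((LinearMap.lcomp R R E.subtype) ∘ₗ B) := by
    intro E
    ext a
    rw [hmemD, LinearMap.mem_ker]
    constructor
    · intro h
      apply LinearMap.ext
      intro c
      exact h c.1 c.2
    · intro h c hc
      exact LinearMap.congr_fun h ⟨c, hc⟩
  have hBbij : Function.Bijective B := by
    rw [Nat.bijective_iff_injective_and_card]
    constructor
    · have hker : ∀ a : Fin n → S, B a = 0 → a = 0 := by
        intro a ha
        funext j
        apply ndg
        intro s
        have h1 := LinearMap.congr_fun ha (Pi.single j s)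
        have h2 : (∑ i, a i * (Pi.single j s : Fin n → S) i) = a j * s := by
          rw [Finset.sum_eq_single j]
          · rw [Pi.single_eq_same]
          · intro i _ hij
            rw [Pi.single_eq_of_ne hij, mul_zero]
          · intro h
            exact absurd (Finset.mem_univ j) h
        rw [hB, LinearMap.mk₂_apply, h2] at h1
        exact h1
      intro a b hab
      have : B (a - b) = 0 := by rw [map_sub, hab, sub_self]
      have := hker _ this
      exact sub_eq_zero.mp this
    · exact (cr_card_hom hspan hnil hmin _ _ rfl).symm
  have hcardDual : ∀ E : Submodule R (Fin n → S),
      Nat.card ↥(traceDual Tr E) * Nat.card ↥E = Nat.card (Fin n → S) := by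
    intro E
    set f : (Fin n → S) →ₗ[R] (↥E →ₗ[R] R) := (LinearMap.lcomp R R E.subtype) ∘ₗ B with hf
    have hsurjf : Function.Surjective f := by
      intro g
      obtain ⟨h1, hh1⟩ := baer.extension_property E.subtype (Submodule.injective_subtype E) g
      obtain ⟨a, ha⟩ := hBbij.2 h1
      refine ⟨a, ?_⟩
      rw [hf]
      show LinearMap.lcomp R R E.subtype (B a) = g
      rw [ha]
      exact hh1
    have hc1 : Nat.card (Fin n → S)
        = Nat.card ↥(LinearMap.ker f) * Nat.card ((Fin n → S) ⧸ LinearMap.ker f) :=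
      Submodule.card_eq_card_quotient_mul_card _
    have hc2 : Nat.card ((Fin n → S) ⧸ LinearMap.ker f) = Nat.card (↥E →ₗ[R] R) := by
      rw [Nat.card_congr f.quotKerEquivRange.toEquiv, LinearMap.range_eq_top.mpr hsurjf]
      exact Nat.card_congr Submodule.topEquiv.toEquiv
    have hc3 : Nat.card (↥E →ₗ[R] R) = Nat.card ↥E := cr_card_hom hspan hnil hmin _ _ rfl
    have hker : traceDual Tr E = LinearMap.ker f := hkerB E
    rw [hker, hc1, hc2, hc3]
  have hdd : ∀ E : Submodule R (Fin n → S), traceDual Tr (traceDual Tr E) = E := by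
    intro E
    have le1 : E ≤ traceDual Tr (traceDual Tr E) := by
      intro c hc
      rw [hmemD]
      intro a ha
      rw [hmemD] at ha
      have hcomm : (∑ i, c i * a i) = ∑ i, a i * c i :=
        Finset.sum_congr rfl fun i _ => mul_comm _ _
      rw [hcomm]
      exact ha c hc
    have hE := hcardDual E
    have hDE := hcardDual (traceDual Tr E)
    have hpos : 0 < Nat.card ↥(traceDual Tr E) := Nat.card_pos
    have h4 : Nat.card ↥(traceDual Tr (traceDual Tr E)) = Nat.card ↥E :=
      Nat.eq_of_mul_eq_mul_right hpos (by rw [hDE, ← hE]; exact Nat.mul_comm _ _)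
    exact (submod_eq_of_le_of_card_le le1 (le_of_eq h4)).symm
  have hsup : ∀ E F : Submodule R (Fin n → S),
      traceDual Tr (E ⊔ F) = traceDual Tr E ⊓ traceDual Tr F := by
    intro E F
    ext a
    rw [Submodule.mem_inf, hmemD, hmemD, hmemD]
    constructor
    · intro h
      exact ⟨fun c hc => h c (Submodule.mem_sup_left hc),
        fun c hc => h c (Submodule.mem_sup_right hc)⟩
    · rintro ⟨h1, h2⟩ c hc
      obtain ⟨c1, hc1, c2, hc2, rfl⟩ := Submodule.mem_sup.mp hc
      have : (∑ i, a i * (c1 + c2) i) = (∑ i, a i * c1 i) + ∑ i, a i * c2 i := by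
        rw [← Finset.sum_add_distrib]
        exact Finset.sum_congr rfl fun i _ => by simp [mul_add]
      rw [this, map_add, h1 c1 hc1, h2 c2 hc2, add_zero]
  refine ⟨hsup Cc Dc, ?_⟩
  calc traceDual Tr Cc ⊔ traceDual Tr Dc
      = traceDual Tr (traceDual Tr (traceDual Tr Cc ⊔ traceDual Tr Dc)) := (hdd _).symm
    _ = traceDual Tr (traceDual Tr (traceDual Tr Cc) ⊓ traceDual Tr (traceDual Tr Dc)) := by
        rw [hsup]
    _ = traceDual Tr (Cc ⊓ Dc) := by rw [hdd, hdd]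
end

section
/- Let C and D be R-submodules of S^n. Then the pair {C, D} is an additive complementary pair (C ∩ D = {0} and C + D = S^n) if and only if the pair {C^{⊥Tr}, D^{⊥Tr}} is an additive complementary pair. -/
open Classical in

lemma chain_ring_aux (R : Type*) [CommRing R] [IsLocalRing R] [IsPrincipalIdealRing R]
    [Finite R] :
    ∃ (π : R) (e : ℕ), IsLocalRing.maximalIdeal R = Ideal.span {π} ∧ 0 < e ∧ π ^ e = 0 ∧
      π ^ (e - 1) ≠ 0 ∧ (∀ k, π ^ k = 0 → e ≤ k) ∧
      (∀ x : R, x ≠ 0 → ∃ (c : ℕ) (w : R), IsUnit w ∧ x = w * π ^ c ∧ c < e) := by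
  obtain ⟨π, hπ⟩ := (IsPrincipalIdealRing.principal (IsLocalRing.maximalIdeal R)).principal
  classical
  haveI : IsArtinianRing R := isArtinian_of_finite
  have hnil : ∃ m : ℕ, π ^ m = 0 := by
    obtain ⟨k, hk⟩ := IsArtinianRing.isNilpotent_jacobson_bot (R := R)
    refine ⟨k, ?_⟩
    have hj : Ideal.jacobson (⊥ : Ideal R) = IsLocalRing.maximalIdeal R :=
      IsLocalRing.jacobson_eq_maximalIdeal ⊥ bot_ne_top
    have hmem : π ∈ IsLocalRing.maximalIdeal R := by
      rw [hπ]; exact Ideal.subset_span rfl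
    have : π ^ k ∈ (Ideal.jacobson (⊥ : Ideal R)) ^ k := by
      rw [hj]; exact Ideal.pow_mem_pow hmem k
    rw [hk] at this
    simpa using this
  set e := Nat.find hnil with he_def
  have he : π ^ e = 0 := Nat.find_spec hnil
  have hmin : ∀ k, π ^ k = 0 → e ≤ k := fun k h => Nat.find_min' hnil h
  have he0 : 0 < e := by
    rcases Nat.eq_zero_or_pos e with h | h
    · exfalso
      have := he
      rw [h, pow_zero] at this
      exact one_ne_zero this
    · exact h
  have hene : π ^ (e - 1) ≠ 0 := by
    intro h
    have := hmin _ h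
    omega
  refine ⟨π, e, hπ, he0, he, hene, hmin, ?_⟩
  intro x hx
  have hxe : x ∉ Ideal.span {π ^ ((e - 1) + 1)} := by
    rw [Nat.sub_add_cancel he0, he]
    intro hmem
    rw [Ideal.span_singleton_eq_bot.mpr rfl] at hmem
    exact hx hmem
  have H2 : ∃ m : ℕ, x ∉ Ideal.span {π ^ (m + 1)} := ⟨e - 1, hxe⟩
  set c := Nat.find H2 with hc_def
  have hc : x ∉ Ideal.span {π ^ (c + 1)} := Nat.find_spec H2
  have hce : c < e := by
    have := Nat.find_min' H2 hxe
    omega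
  have hxc : x ∈ Ideal.span {π ^ c} := by
    rcases Nat.eq_zero_or_pos c with h | h
    · rw [h, pow_zero, Ideal.span_singleton_one]; trivial
    · by_contra hnot
      have := Nat.find_min H2 (show c - 1 < c by omega)
      rw [Nat.sub_add_cancel h] at this
      exact this hnot
  obtain ⟨y, hy⟩ := Ideal.mem_span_singleton.mp hxc
  have hyu : IsUnit y := by
    by_contra hyn
    have hymem : y ∈ IsLocalRing.maximalIdeal R := hyn
    rw [hπ] at hymem
    obtain ⟨z, hz⟩ := Ideal.mem_span_singleton.mp hymem
    apply hc
    rw [Ideal.mem_span_singleton]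
    exact ⟨z, by rw [hy, hz]; ring⟩
  exact ⟨c, y, hyu, by rw [hy]; ring, hce⟩

lemma baer_of_chain (R : Type*) [CommRing R] [IsLocalRing R] [IsPrincipalIdealRing R]
    [Finite R] : Module.Baer R R := by
  obtain ⟨π, e, hm, he0, he, hene, hmin, hdec⟩ := chain_ring_aux R
  intro I g
  obtain ⟨s, hs⟩ := (IsPrincipalIdealRing.principal I).principal
  by_cases hs0 : s = 0
  · refine ⟨0, fun x mem => ?_⟩
    have hx0 : x = 0 := by
      have hh : x ∈ Submodule.span R {s} := hs ▸ mem
      rw [hs0] at hh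
      simpa [Ideal.span_singleton_eq_bot.mpr rfl] using hh
    have : (⟨x, mem⟩ : I) = 0 := Subtype.ext hx0
    rw [this, map_zero]
    simp
  · obtain ⟨c, w, hw, hsw, hce⟩ := hdec s hs0
    have hsmem : s ∈ I := by rw [hs]; exact Ideal.subset_span rfl
    set x := g ⟨s, hsmem⟩ with hx_def
    have key : π ^ (e - c) * x = 0 := by
      have h1 : π ^ (e - c) • (⟨s, hsmem⟩ : I) = 0 := by
        apply Subtype.ext
        show π ^ (e - c) • s = 0
        rw [smul_eq_mul, hsw, show π ^ (e-c) * (w * π ^ c) = w * π ^ (e - c + c) by ring,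
          Nat.sub_add_cancel hce.le, he, mul_zero]
      calc π ^ (e - c) * x = g (π ^ (e - c) • (⟨s, hsmem⟩ : I)) := by
            rw [map_smul, smul_eq_mul]
        _ = 0 := by rw [h1, map_zero]
    by_cases hx0 : x = 0
    · refine ⟨0, fun z mem => ?_⟩
      obtain ⟨r, hr⟩ := Ideal.mem_span_singleton.mp (hs ▸ mem)
      have : (⟨z, mem⟩ : I) = r • (⟨s, hsmem⟩ : I) := by
        apply Subtype.ext
        show z = r • s
        rw [hr, smul_eq_mul, mul_comm]
      rw [this, map_smul, ← hx_def, hx0, smul_zero]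
      simp
    · obtain ⟨d, u, hu, hxu, hde⟩ := hdec x hx0
      have hπ0 : π ^ (e - c + d) = 0 := by
        have h1 : u * π ^ (e - c + d) = 0 := by
          rw [pow_add, ← mul_assoc, mul_comm u (π ^ (e-c)), mul_assoc, ← hxu, key]
        obtain ⟨ui, hui⟩ := hu.exists_left_inv
        calc π ^ (e - c + d) = (ui * u) * π ^ (e - c + d) := by rw [hui, one_mul]
          _ = ui * (u * π ^ (e - c + d)) := by ring
          _ = 0 := by rw [h1, mul_zero]
      have hcd : c ≤ d := by
        have := hmin _ hπ0
        omega
      obtain ⟨wi, hwi⟩ := hw.exists_left_inv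
      set y := u * π ^ (d - c) * wi with hy_def
      have hsy : s * y = x := by
        rw [hsw, hxu]
        calc w * π ^ c * (u * π ^ (d - c) * wi)
            = (wi * w) * (u * (π ^ c * π ^ (d - c))) := by ring
          _ = u * π ^ d := by rw [hwi, one_mul, ← pow_add, Nat.add_sub_cancel' hcd]
      refine ⟨LinearMap.toSpanSingleton R R y, fun z mem => ?_⟩
      obtain ⟨r, hr⟩ := Ideal.mem_span_singleton.mp (hs ▸ mem)
      have hz : (⟨z, mem⟩ : I) = r • (⟨s, hsmem⟩ : I) := by
        apply Subtype.ext
        show z = r • s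
        rw [hr, smul_eq_mul, mul_comm]
      rw [hz, map_smul, ← hx_def, LinearMap.toSpanSingleton_apply, smul_eq_mul, smul_eq_mul,
        hr, mul_comm s r, mul_assoc, hsy]

lemma exists_functional {R M : Type*} [CommRing R] [IsLocalRing R] [IsPrincipalIdealRing R]
    [Finite R] [AddCommGroup M] [Module R M] (v : M) (hv : v ≠ 0) :
    ∃ F : M →ₗ[R] R, F v ≠ 0 := by
  obtain ⟨π, e, hm, he0, he, hene, hmin, hdec⟩ := chain_ring_aux R
  set u : R →ₗ[R] M := LinearMap.toSpanSingleton R M v with hu_def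
  set h : R →ₗ[R] R := LinearMap.toSpanSingleton R R (π ^ (e - 1)) with hh_def
  have hle : LinearMap.ker u ≤ LinearMap.ker h := by
    intro r hr
    rw [LinearMap.mem_ker] at hr ⊢
    have hru : ¬ IsUnit r := by
      intro hru
      apply hv
      have hrv : r • v = 0 := hr
      have : (↑hru.unit⁻¹ : R) • (r • v) = (↑hru.unit⁻¹ : R) • (0 : M) := by rw [hrv]
      rwa [smul_smul, IsUnit.val_inv_mul, one_smul, smul_zero] at this
    have hrm : r ∈ IsLocalRing.maximalIdeal R := hru
    rw [hm] at hrm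
    obtain ⟨t, ht⟩ := Ideal.mem_span_singleton.mp hrm
    rw [hh_def, LinearMap.toSpanSingleton_apply, smul_eq_mul, ht]
    calc π * t * π ^ (e - 1) = t * π ^ (e - 1 + 1) := by ring
      _ = 0 := by rw [Nat.sub_add_cancel he0, he, mul_zero]
  set g₁ : (R ⧸ LinearMap.ker u) →ₗ[R] R := Submodule.liftQ (LinearMap.ker u) h hle with hg1
  set eqv := LinearMap.quotKerEquivRange u with heqv
  set g : LinearMap.range u →ₗ[R] R := g₁ ∘ₗ eqv.symm.toLinearMap with hg
  obtain ⟨F, hF⟩ := (baer_of_chain R).extension_property (LinearMap.range u).subtype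
    (Submodule.injective_subtype _) g
  have hvmem : v ∈ LinearMap.range u := ⟨1, by rw [LinearMap.toSpanSingleton_apply, one_smul]⟩
  refine ⟨F, ?_⟩
  have h1 : F v = g ⟨v, hvmem⟩ := by
    have := DFunLike.congr_fun hF (⟨v, hvmem⟩ : LinearMap.range u)
    simpa using this
  have h2 : eqv (Submodule.Quotient.mk (1 : R)) = ⟨v, hvmem⟩ := by
    apply Subtype.ext
    rw [heqv, LinearMap.quotKerEquivRange_apply_mk]
    show u 1 = v
    rw [LinearMap.toSpanSingleton_apply, one_smul]
  have h3 : eqv.symm ⟨v, hvmem⟩ = Submodule.Quotient.mk (1 : R) := by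
    rw [← h2, LinearEquiv.symm_apply_apply]
  rw [h1, hg]
  show g₁ (eqv.symm ⟨v, hvmem⟩) ≠ 0
  rw [h3, hg1, Submodule.liftQ_apply, hh_def, LinearMap.toSpanSingleton_apply, one_smul]
  exact hene

set_option linter.unusedSectionVars false in
theorem exists_skew_unit {R S : Type*} [CommRing R] [CommRing S]
    [IsLocalRing R] [IsLocalRing S] [Finite S] [Algebra R S]
    (hmS : IsLocalRing.maximalIdeal S
        = Ideal.map (algebraMap R S) (IsLocalRing.maximalIdeal R))
    (φ : S ≃ₐ[R] S) (hφ2 : ∀ s, φ (φ s) = s) (hφne : φ ≠ (AlgEquiv.refl : S ≃ₐ[R] S))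
    (hfix : ∀ s : S, φ s = s ↔ s ∈ (algebraMap R S).range)
    (h2 : IsUnit (2 : R)) :
    ∃ θ : S, IsUnit θ ∧ φ θ = -θ := by
  have h21 : (2 : S) * algebraMap R S (↑h2.unit⁻¹) = 1 := by
    have : algebraMap R S ((2:R) * ↑h2.unit⁻¹) = algebraMap R S 1 := by
      rw [IsUnit.mul_val_inv]
    rw [map_mul, map_one] at this
    rw [← this, map_ofNat]
  suffices hex : ∃ y : S, IsUnit (y - φ y) by
    obtain ⟨y, hy⟩ := hex
    refine ⟨y - φ y, hy, ?_⟩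
    rw [map_sub, hφ2]
    ring
  by_contra hne
  push_neg at hne
  set N : Submodule R S := LinearMap.range (Algebra.linearMap R S) with hN
  haveI : Finite (S ⧸ N) := Quotient.finite _
  have hmmem : ∀ s : S, (s - φ s) * algebraMap R S (↑h2.unit⁻¹)
      ∈ (IsLocalRing.maximalIdeal R) • (⊤ : Submodule R S) := by
    intro s
    rw [Ideal.smul_top_eq_map]
    have h1 : (s - φ s) ∈ IsLocalRing.maximalIdeal S := hne s
    have h2' : (s - φ s) * algebraMap R S (↑h2.unit⁻¹) ∈ IsLocalRing.maximalIdeal S :=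
      Ideal.mul_mem_right _ _ h1
    rw [hmS] at h2'
    exact h2'
  have hQ : (⊤ : Submodule R (S ⧸ N)) = ⊥ := by
    apply Submodule.eq_bot_of_le_smul_of_le_jacobson_bot (IsLocalRing.maximalIdeal R)
    · exact ⟨Set.Finite.toFinset (Set.finite_univ), by
        simp [Set.Finite.coe_toFinset]⟩
    · intro q _
      obtain ⟨s, rfl⟩ := N.mkQ_surjective q
      have hqeq : N.mkQ s = N.mkQ ((s - φ s) * algebraMap R S (↑h2.unit⁻¹)) := by
        rw [Submodule.mkQ_apply, Submodule.mkQ_apply, Submodule.Quotient.eq]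
        have heq : s - (s - φ s) * algebraMap R S (↑h2.unit⁻¹)
            = (s + φ s) * algebraMap R S (↑h2.unit⁻¹) := by
          linear_combination (-s) * h21
        rw [heq]
        have hf : φ ((s + φ s) * algebraMap R S (↑h2.unit⁻¹))
            = (s + φ s) * algebraMap R S (↑h2.unit⁻¹) := by
          rw [map_mul, map_add, hφ2, AlgEquiv.commutes]
          ring
        obtain ⟨r, hr⟩ := (hfix _).mp hf
        exact ⟨r, hr⟩
      rw [hqeq]
      have hmem2 : N.mkQ ((s - φ s) * algebraMap R S (↑h2.unit⁻¹))
          ∈ Submodule.map N.mkQ ((IsLocalRing.maximalIdeal R) • (⊤ : Submodule R S)) :=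
        Submodule.mem_map_of_mem (hmmem s)
      rwa [Submodule.map_smul'', Submodule.map_top, N.range_mkQ] at hmem2
    · rw [IsLocalRing.jacobson_eq_maximalIdeal ⊥ bot_ne_top]
  apply hφne
  apply AlgEquiv.ext
  intro s
  have hsN : s ∈ N := by
    have : N.mkQ s ∈ (⊤ : Submodule R (S ⧸ N)) := trivial
    rw [hQ, Submodule.mem_bot, Submodule.mkQ_apply, Submodule.Quotient.mk_eq_zero] at this
    exact this
  obtain ⟨r, hr⟩ := hsN
  simp only [AlgEquiv.coe_refl, id_eq]
  exact (hfix s).mpr ⟨r, hr⟩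



/-- `{C, D}` is an additive complementary pair iff
`{C^⊥Tr, D^⊥Tr}` is an additive complementary pair. -/
theorem acp_iff_traceDual_acp
    (R S : Type*) [CommRing R] [CommRing S]
    [IsLocalRing R] [IsLocalRing S]
    [IsPrincipalIdealRing R] [IsPrincipalIdealRing S]
    [Finite R] [Finite S] [Algebra R S]
    (hinj : Function.Injective (algebraMap R S))
    (hmR : (IsLocalRing.maximalIdeal S).comap (algebraMap R S) = IsLocalRing.maximalIdeal R)
    [Module.Free R S] (hrk : Module.finrank R S = 2)
    (hmS : IsLocalRing.maximalIdeal S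
        = Ideal.map (algebraMap R S) (IsLocalRing.maximalIdeal R))
    (φ : S ≃ₐ[R] S) (hφ2 : ∀ s, φ (φ s) = s) (hφne : φ ≠ (AlgEquiv.refl : S ≃ₐ[R] S))
    (hfix : ∀ s : S, φ s = s ↔ s ∈ (algebraMap R S).range)
    (h2 : IsUnit (2 : R))
    (Tr : S →ₗ[R] R) (hTr : ∀ s, algebraMap R S (Tr s) = s + φ s)
    (hTrsurj : Function.Surjective Tr)
    (n : ℕ) (Cc Dc : Submodule R (Fin n → S)) :
    (Cc ⊓ Dc = ⊥ ∧ Cc ⊔ Dc = ⊤) ↔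
      (traceDual Tr Cc ⊓ traceDual Tr Dc = ⊥ ∧
        traceDual Tr Cc ⊔ traceDual Tr Dc = ⊤) := by
  -- basic facts
  obtain ⟨θ, hθ, hφθ⟩ := exists_skew_unit hmS φ hφ2 hφne hfix h2
  set i2 : R := ↑h2.unit⁻¹ with hi2
  have h2i2 : (2 : R) * i2 = 1 := IsUnit.mul_val_inv h2
  have h21S : (2 : S) * algebraMap R S i2 = 1 := by
    have : algebraMap R S ((2:R) * i2) = algebraMap R S 1 := by rw [h2i2]
    rw [map_mul, map_one] at this
    rw [← this, map_ofNat]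
  -- linearity helper
  have hTrsmul : ∀ (a : R) (s : S), Tr (algebraMap R S a * s) = a * Tr s := by
    intro a s
    rw [← Algebra.smul_def, map_smul, smul_eq_mul]
  -- nondegeneracy
  have hND : ∀ x : S, (∀ y, Tr (x * y) = 0) → x = 0 := by
    intro x hx
    have hkey : ∀ y, x * y + φ x * φ y = 0 := by
      intro y
      have h := hTr (x * y)
      rw [hx y, map_zero, map_mul] at h
      exact h.symm
    have h1 : φ x = -x := by
      have := hkey 1
      rw [mul_one, map_one, mul_one] at this
      linear_combination this
    have h2' : x * θ = 0 := by
      have hy := hkey θ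
      rw [h1, hφθ] at hy
      linear_combination (algebraMap R S i2) * hy - (x * θ) * h21S
    obtain ⟨ti, hti⟩ := hθ.exists_left_inv
    calc x = x * (ti * θ) := by rw [hti, mul_one]
      _ = ti * (x * θ) := by ring
      _ = 0 := by rw [h2', mul_zero]
  -- trace values
  have hTr1 : Tr 1 = 2 := by
    apply hinj
    rw [hTr 1, map_one, map_ofNat]
    norm_num
  have hTrθ : Tr θ = 0 := by
    apply hinj
    rw [hTr θ, hφθ, map_zero]
    ring
  obtain ⟨r₀, hr₀⟩ : ∃ r : R, algebraMap R S r = θ * θ := by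
    have hf : φ (θ * θ) = θ * θ := by rw [map_mul, hφθ]; ring
    obtain ⟨r, hr⟩ := (hfix _).mp hf
    exact ⟨r, hr⟩
  have hr₀u : IsUnit r₀ := by
    by_contra hr
    have hmem : r₀ ∈ IsLocalRing.maximalIdeal R := hr
    have : algebraMap R S r₀ ∈ IsLocalRing.maximalIdeal S := by
      rw [hmS]
      exact Ideal.mem_map_of_mem _ hmem
    rw [hr₀] at this
    exact this (hθ.mul hθ)
  have hTrθ2 : Tr (θ * θ) = 2 * r₀ := by
    apply hinj
    rw [hTr (θ * θ), map_mul, hφθ, map_mul, map_ofNat, hr₀]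
    ring
  -- representation
  have hrep : ∀ s : S, ∃ a b : R, s = algebraMap R S a + algebraMap R S b * θ := by
    intro s
    obtain ⟨a₀, ha₀⟩ := (hfix (s + φ s)).mp (by rw [map_add, hφ2]; ring)
    obtain ⟨ti, hti⟩ := hθ.exists_left_inv
    set v := s - φ s with hv
    have hφv : φ v = -v := by rw [hv, map_sub, hφ2]; ring
    have h4 : v * ti * θ = v := by rw [mul_assoc, hti, mul_one]
    have e1 : φ (v * ti) * θ = v := by
      have h3 : φ (v * ti) * φ θ = φ (v * ti * θ) := (map_mul φ _ _).symm
      rw [hφθ, h4, hφv] at h3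
      linear_combination -h3
    have hw : φ (v * ti) = v * ti := by
      calc φ (v * ti) = φ (v * ti) * (θ * ti) := by rw [mul_comm θ ti, hti, mul_one]
        _ = (φ (v * ti) * θ) * ti := by ring
        _ = (v * ti * θ) * ti := by rw [e1, h4]
        _ = (v * ti) * (θ * ti) := by ring
        _ = v * ti := by rw [mul_comm θ ti, hti, mul_one]
    obtain ⟨b₀, hb₀⟩ := (hfix _).mp hw
    have hb : algebraMap R S b₀ * θ = s - φ s := by rw [hb₀]; exact h4
    refine ⟨a₀ * i2, b₀ * i2, ?_⟩
    rw [map_mul, map_mul]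
    linear_combination (- algebraMap R S i2) * ha₀ - (algebraMap R S i2) * hb
      + (- s) * h21S
  -- perfectness on S
  have hP1 : ∀ f : S →ₗ[R] R, ∃ x : S, ∀ y, Tr (x * y) = f y := by
    intro f
    obtain ⟨r₀i, hr₀i⟩ := hr₀u.exists_left_inv
    set α : R := f 1 * i2 with hα
    set β : R := f θ * i2 * r₀i with hβ
    set x : S := algebraMap R S α + algebraMap R S β * θ with hx
    have hTrx : Tr x = f 1 := by
      have e1 : Tr x = α * Tr 1 + β * Tr θ := by
        rw [hx]
        have : algebraMap R S α + algebraMap R S β * θ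
            = algebraMap R S α * 1 + algebraMap R S β * θ := by ring
        rw [this, map_add, hTrsmul, hTrsmul]
      rw [e1, hTr1, hTrθ, hα]
      linear_combination (f 1) * h2i2
    have hTrxθ : Tr (x * θ) = f θ := by
      have e1 : Tr (x * θ) = α * Tr θ + β * Tr (θ * θ) := by
        have : x * θ = algebraMap R S α * θ + algebraMap R S β * (θ * θ) := by rw [hx]; ring
        rw [this, map_add, hTrsmul, hTrsmul]
      rw [e1, hTrθ, hTrθ2, hα, hβ]
      linear_combination (f θ * r₀i * r₀) * h2i2 + (f θ) * hr₀i
    refine ⟨x, fun y => ?_⟩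
    obtain ⟨a, b, hy⟩ := hrep y
    have e2 : x * y = algebraMap R S a * x + algebraMap R S b * (x * θ) := by
      rw [hy]; ring
    rw [e2, map_add, hTrsmul, hTrsmul, hTrx, hTrxθ]
    have e3 : y = a • (1 : S) + b • θ := by
      rw [hy, Algebra.smul_def, Algebra.smul_def, mul_one]
    rw [e3, map_add, map_smul, map_smul, smul_eq_mul, smul_eq_mul]
  -- perfectness on S^n
  have hP : ∀ f : (Fin n → S) →ₗ[R] R, ∃ a : Fin n → S, ∀ y, Tr (∑ i, a i * y i) = f y := by
    intro f
    choose x hx using fun i => hP1 (f ∘ₗ LinearMap.single R (fun _ : Fin n => S) i)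
    refine ⟨x, fun y => ?_⟩
    rw [map_sum]
    have e1 : ∀ i ∈ Finset.univ, Tr (x i * y i) = f (Pi.single i (y i)) := by
      intro i _
      have := hx i (y i)
      simpa using this
    rw [Finset.sum_congr rfl e1, ← map_sum]
    congr 1
    exact Finset.univ_sum_single y
  -- dual of top is bot
  have hT2 : traceDual Tr (⊤ : Submodule R (Fin n → S)) = ⊥ := by
    ext a
    simp only [Submodule.mem_bot]
    constructor
    · intro ha
      funext j
      show a j = 0
      apply hND
      intro y
      have h := ha (Pi.single j y) trivial
      rwa [show (∑ i, a i * (Pi.single j y : Fin n → S) i) = a j * y by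
        simp [Pi.single_apply, mul_ite, mul_zero]] at h
    · intro ha
      rw [ha]
      exact (traceDual Tr ⊤).zero_mem
  -- dual = top implies bot
  have hT7 : ∀ E : Submodule R (Fin n → S), traceDual Tr E = ⊤ → E = ⊥ := by
    intro E hE
    rw [eq_bot_iff]
    intro c hc
    have hc0 : c = 0 := by
      funext j
      show c j = 0
      apply hND
      intro y
      have hmem' : (Pi.single j y : Fin n → S) ∈ traceDual Tr E := by rw [hE]; trivial
      have h := hmem' c hc
      rwa [show (∑ i, (Pi.single j y : Fin n → S) i * c i) = c j * y by
        simp [Pi.single_apply, ite_mul, zero_mul, mul_comm]] at h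
    rw [hc0]
    exact Submodule.zero_mem ⊥
  -- antitone
  have hAnti : ∀ E F : Submodule R (Fin n → S), E ≤ F → traceDual Tr F ≤ traceDual Tr E :=
    fun E F h a ha c hc => ha c (h hc)
  -- dual of sup
  have hT1 : ∀ E F : Submodule R (Fin n → S),
      traceDual Tr (E ⊔ F) = traceDual Tr E ⊓ traceDual Tr F := by
    intro E F
    apply le_antisymm
    · exact le_inf (hAnti _ _ le_sup_left) (hAnti _ _ le_sup_right)
    · intro a ha
      obtain ⟨ha1, ha2⟩ := Submodule.mem_inf.mp ha
      intro c hc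
      obtain ⟨c₁, hc₁, c₂, hc₂, rfl⟩ := Submodule.mem_sup.mp hc
      have e : (∑ i, a i * (c₁ + c₂) i) = (∑ i, a i * c₁ i) + ∑ i, a i * c₂ i := by
        rw [← Finset.sum_add_distrib]
        simp [mul_add]
      rw [e, map_add, ha1 c₁ hc₁, ha2 c₂ hc₂, add_zero]
  -- dual = bot implies top
  have hT6 : ∀ E : Submodule R (Fin n → S), traceDual Tr E = ⊥ → E = ⊤ := by
    intro E hE
    by_contra hne
    obtain ⟨v, hv⟩ : ∃ v, v ∉ E := by
      by_contra h
      push_neg at h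
      exact hne (Submodule.eq_top_iff'.mpr h)
    have hv0 : E.mkQ v ≠ 0 := by
      rw [Submodule.mkQ_apply, ne_eq, Submodule.Quotient.mk_eq_zero]
      exact hv
    obtain ⟨F, hF⟩ := exists_functional (R := R) (E.mkQ v) hv0
    obtain ⟨a, ha⟩ := hP (F ∘ₗ E.mkQ)
    have haE : a ∈ traceDual Tr E := by
      intro c hc
      rw [ha c]
      show F (E.mkQ c) = 0
      rw [Submodule.mkQ_apply, (Submodule.Quotient.mk_eq_zero E).mpr hc, map_zero]
    rw [hE, Submodule.mem_bot] at haE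
    apply hF
    have h0 : (0 : R) = (F ∘ₗ E.mkQ) v := by
      rw [← ha v, haE]
      simp
    exact h0.symm
  -- bilinear form as a linear map
  have hbform : ∀ a : Fin n → S,
      ∃ f : (Fin n → S) →ₗ[R] R, ∀ y, f y = Tr (∑ i, a i * y i) := by
    intro a
    refine ⟨⟨⟨fun y => Tr (∑ i, a i * y i), ?_⟩, ?_⟩, fun y => rfl⟩
    · intro y z
      have e : (∑ i, a i * (y + z) i) = (∑ i, a i * y i) + ∑ i, a i * z i := by
        rw [← Finset.sum_add_distrib]
        simp [mul_add]
      rw [e, map_add]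
    · intro r y
      dsimp only
      have e : (∑ i, a i * (r • y) i) = r • ∑ i, a i * y i := by
        rw [Finset.smul_sum]
        simp [mul_smul_comm]
      simp only [e, map_smul, RingHom.id_apply, smul_eq_mul]
  -- forward sup
  have hT5 : Cc ⊓ Dc = ⊥ → Cc ⊔ Dc = ⊤ →
      traceDual Tr Cc ⊔ traceDual Tr Dc = ⊤ := by
    intro h1 h2'
    have hcompl : IsCompl Cc Dc := ⟨disjoint_iff.mpr h1, codisjoint_iff.mpr h2'⟩
    rw [eq_top_iff]
    intro a _
    obtain ⟨f, hf⟩ := hbform a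
    set prD : (Fin n → S) →ₗ[R] (Fin n → S) :=
      Dc.subtype ∘ₗ (Submodule.projectionOnto Dc Cc hcompl.symm) with hprD
    obtain ⟨a₁, ha₁⟩ := hP (f ∘ₗ prD)
    apply Submodule.mem_sup.mpr
    refine ⟨a₁, ?_, a - a₁, ?_, by abel⟩
    · intro c hc
      rw [ha₁ c]
      show f (Dc.subtype (Submodule.projectionOnto Dc Cc hcompl.symm c)) = 0
      rw [Submodule.projectionOnto_apply_of_mem_right hcompl.symm hc]
      simp
    · intro d hd
      have e : (∑ i, (a - a₁) i * d i) = (∑ i, a i * d i) - ∑ i, a₁ i * d i := by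
        rw [← Finset.sum_sub_distrib]
        simp [sub_mul]
      have hproj : Submodule.projectionOnto Dc Cc hcompl.symm d = ⟨d, hd⟩ :=
        Submodule.projectionOnto_apply_left hcompl.symm ⟨d, hd⟩
      rw [e, map_sub, ha₁ d, ← hf d]
      show f d - f (Dc.subtype (Submodule.projectionOnto Dc Cc hcompl.symm d)) = 0
      rw [hproj]
      show f d - f d = 0
      ring
  -- conclusion
  constructor
  · rintro ⟨h1, h2'⟩
    refine ⟨?_, hT5 h1 h2'⟩
    rw [← hT1, h2', hT2]
  · rintro ⟨h1', h2''⟩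
    constructor
    · apply hT7
      rw [eq_top_iff, ← h2'']
      exact sup_le (hAnti _ _ inf_le_left) (hAnti _ _ inf_le_right)
    · apply hT6
      rw [hT1, h1']
end
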